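/- arXiv:1502.05904 — 6 statements merged into one kernel-verified Lean document; each statement's English description precedes it below -/
import Mathlib

section
/- If P is a complex polynomial of degree n, then the maximum of |P'(z)| over the unit circle |z|=1 is at most n times the maximum of |P(z)| over |z|=1. -/
/-!
Suppose `‖P' z‖ > n M` at some `‖z‖ = 1`, where `M` bounds `‖P‖` on the unit circle, and choose
`c` with `P' z = n c z ^ (n - 1)`, so that `‖c‖ > M`. By the maximum modulus principle applied to
the reflected polynomial, `‖P u‖ ≤ M ‖u‖ ^ n` for `‖u‖ ≥ 1`, hence `Q = c X ^ n - P` has all its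
roots in the open unit disc. By Gauss–Lucas so does `Q'`, contradicting `Q' z = 0`.
-/

open Polynomial Metric

namespace Polynomial

variable {P : ℂ[X]} {n : ℕ} {M : ℝ}

theorem eval_reflect_inv_mul_pow (hP : P.natDegree ≤ n) {x : ℂ} (hx : x ≠ 0) :
    (reflect n P).eval x⁻¹ * x ^ n = P.eval x := by
  let _ : Invertible x := invertibleOfNonzero hx
  have h := eval₂_reflect_mul_pow (RingHom.id ℂ) x n P hP
  rwa [invOf_eq_inv] at h

theorem norm_eval_reflect_le (hP : P.natDegree ≤ n) (hM : ∀ w : ℂ, ‖w‖ = 1 → ‖P.eval w‖ ≤ M)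
    {ζ : ℂ} (hζ : ‖ζ‖ ≤ 1) : ‖(reflect n P).eval ζ‖ ≤ M := by
  have hζ' : ζ ∈ closure (ball (0 : ℂ) 1) := by
    rwa [closure_ball _ one_ne_zero, mem_closedBall_zero_iff]
  refine Complex.norm_le_of_forall_mem_frontier_norm_le isBounded_ball
    (reflect n P).differentiable.diffContOnCl (fun w hw => ?_) hζ'
  rw [frontier_ball _ one_ne_zero, mem_sphere_zero_iff_norm] at hw
  have hw₀ : w ≠ 0 := norm_ne_zero_iff.mp (by rw [hw]; exact one_ne_zero)
  have hw_inv : ‖w⁻¹‖ = 1 := by rw [norm_inv, hw, inv_one]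
  have := eval_reflect_inv_mul_pow hP (inv_ne_zero hw₀)
  rw [inv_inv] at this
  calc ‖(reflect n P).eval w‖ = ‖P.eval w⁻¹‖ := by rw [← this, norm_mul, norm_pow, hw_inv]; simp
    _ ≤ M := hM _ hw_inv

theorem norm_coeff_le (hP : P.natDegree ≤ n) (hM : ∀ w : ℂ, ‖w‖ = 1 → ‖P.eval w‖ ≤ M) :
    ‖P.coeff n‖ ≤ M := by
  simpa [← coeff_zero_eq_eval_zero, coeff_reflect] using
    norm_eval_reflect_le hP hM (ζ := 0) (by simp)

theorem norm_eval_le_mul_norm_pow (hP : P.natDegree ≤ n)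
    (hM : ∀ w : ℂ, ‖w‖ = 1 → ‖P.eval w‖ ≤ M) {u : ℂ} (hu : 1 ≤ ‖u‖) :
    ‖P.eval u‖ ≤ M * ‖u‖ ^ n := by
  have hu₀ : u ≠ 0 := norm_pos_iff.mp (one_pos.trans_le hu)
  rw [← eval_reflect_inv_mul_pow hP hu₀, norm_mul, norm_pow]
  gcongr
  exact norm_eval_reflect_le hP hM (by rw [norm_inv]; exact inv_le_one_of_one_le₀ hu)

theorem mem_of_eval_derivative_eq_zero {s : Set ℂ} (hs : Convex ℝ s) (h₀ : 0 < P.degree)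
    (hroots : ∀ w, P.IsRoot w → w ∈ s) {z : ℂ} (hz : P.derivative.eval z = 0) : z ∈ s := by
  rw [eq_centerMass_of_eval_derivative_eq_zero h₀ hz]
  exact hs.centerMass_mem (fun w _ => derivRootWeight_nonneg P z w) (sum_derivRootWeight_pos h₀ z)
    fun w hw => hroots w (isRoot_of_mem_roots (Multiset.mem_toFinset.mp hw))

theorem norm_derivative_eval_le_mul (hP : P.natDegree ≤ n)
    (hM : ∀ w : ℂ, ‖w‖ = 1 → ‖P.eval w‖ ≤ M) {z : ℂ} (hz : ‖z‖ = 1) :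
    ‖P.derivative.eval z‖ ≤ n * M := by
  rcases n.eq_zero_or_pos with rfl | hn
  · simp [derivative_of_natDegree_zero (Nat.le_zero.mp hP)]
  by_contra! hlt
  have hz₀ : z ≠ 0 := norm_ne_zero_iff.mp (by rw [hz]; exact one_ne_zero)
  have hn₀ : (n : ℂ) ≠ 0 := Nat.cast_ne_zero.mpr hn.ne'
  set c := P.derivative.eval z / (n * z ^ (n - 1)) with hc
  have hMc : M < ‖c‖ := by
    rwa [hc, norm_div, norm_mul, norm_pow, hz, one_pow, mul_one, Complex.norm_natCast,
      lt_div_iff₀ (by exact_mod_cast hn), mul_comm]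
  set Q := C c * X ^ n - P
  have hQz : Q.derivative.eval z = 0 := by
    simp only [Q, derivative_sub, derivative_C_mul_X_pow, eval_sub, eval_mul, eval_C, eval_pow,
      eval_X, hc]
    field_simp
    ring
  have hQ_roots : ∀ u, Q.IsRoot u → u ∈ ball (0 : ℂ) 1 := by
    intro u hu
    rw [mem_ball_zero_iff]
    by_contra! h1u
    have hPu : P.eval u = c * u ^ n := by
      rw [IsRoot.def, eval_sub, sub_eq_zero] at hu
      simpa using hu.symm
    have := norm_eval_le_mul_norm_pow hP hM h1u
    rw [hPu, norm_mul, norm_pow] at this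
    exact this.not_gt (mul_lt_mul_of_pos_right hMc (pow_pos (one_pos.trans_le h1u) n))
  have hQ_deg : 0 < Q.degree := by
    by_contra! hdeg
    -- a constant `Q` has vanishing `n`-th coefficient, forcing `c = P.coeff n`
    have hQn : Q.coeff n = 0 := coeff_eq_zero_of_degree_lt (hdeg.trans_lt (by exact_mod_cast hn))
    have hcP : c = P.coeff n := by simpa [Q, sub_eq_zero] using hQn
    exact (norm_coeff_le hP hM).not_gt (hcP ▸ hMc)
  have := mem_of_eval_derivative_eq_zero (convex_ball 0 1) hQ_deg hQ_roots hQz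
  simp [hz] at this

end Polynomial

theorem bernstein_inequality_general (n : ℕ) (P : Polynomial ℂ)
    (hP : P.natDegree = n) (z : ℂ) (hz : ‖z‖ = 1) :
    ‖P.derivative.eval z‖ ≤
      (n : ℝ) * sSup ((fun w => ‖P.eval w‖) '' {w : ℂ | ‖w‖ = 1}) := by
  have hbdd : BddAbove ((fun w => ‖P.eval w‖) '' {w : ℂ | ‖w‖ = 1}) := by
    simpa [sphere, dist_zero_right] using
      ((isCompact_sphere (0 : ℂ) 1).image (continuous_norm.comp P.continuous)).bddAbove
  exact norm_derivative_eval_le_mul hP.le (fun w hw => le_csSup hbdd ⟨w, hw, rfl⟩) hz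

theorem bernstein_inequality (n : ℕ) (hn : 1 ≤ n) (P : Polynomial ℂ)
    (hP : P.natDegree = n) (z : ℂ) (hz : ‖z‖ = 1) :
    ‖P.derivative.eval z‖ ≤
      (n : ℝ) * sSup ((fun w => ‖P.eval w‖) '' {w : ℂ | ‖w‖ = 1}) :=
  bernstein_inequality_general n P hP z hz
end

section
/- If P is a complex polynomial of degree n and p ≥ 1, then ((1/2π)∫₀^{2π} |P'(e^{iθ})|^p dθ)^{1/p} ≤ n · ((1/2π)∫₀^{2π} |P(e^{iθ})|^p dθ)^{1/p}. -/
/-!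
Write `e(t) = exp(i t)` and `F_n(t) = |∑_{a<n} e(a t)|²` (`fejerWeight`, which is `n` times the
Fejér kernel). Its Fourier coefficients are `∫ e(j t) F_n(t) dt = 2π (n - j)`, so for a
polynomial `P = ∑_{k ≤ n} c_k z^k` convolution with the kernel `e(n t) F_n(t)` replaces each
`c_k z^k` by `k c_k z^k`:
`2π e(θ) P'(e(θ)) = ∫ P(e(θ - t)) e(n t) F_n(t) dt`.
As `F_n ≥ 0` has total mass `2π n`, Hölder's inequality with weight `F_n` gives
`(2π |P'(e(θ))|)^p ≤ (2π n)^(p-1) ∫ |P(e(θ - t))|^p F_n(t) dt`; integrating over `θ`, Fubini and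
translation invariance turn the right-hand side into `(2π n)^p ∫ |P(e(θ))|^p`.
-/

open Polynomial Real MeasureTheory Complex

theorem integral_exp_int_mul_I (m : ℤ) :
    ∫ t in (0:ℝ)..2 * π, cexp (m * t * I) = if m = 0 then (2 * π : ℂ) else 0 := by
  split_ifs with hm
  · simp [hm]
  have hc : (m : ℂ) * I ≠ 0 := mul_ne_zero (by exact_mod_cast hm) I_ne_zero
  have hperiod : cexp (m * I * ↑(2 * π)) = 1 := by
    rw [← exp_int_mul_two_pi_mul_I m]; push_cast; ring_nf
  simp_rw [mul_right_comm _ _ I]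
  rw [integral_exp_mul_complex hc, hperiod]
  simp

theorem mul_derivative_eval_eq_sum {R : Type*} [CommSemiring R] {P : R[X]} {n : ℕ}
    (hP : P.natDegree ≤ n) (z : R) :
    z * P.derivative.eval z = ∑ k ∈ Finset.range (n + 1), k * P.coeff k * z ^ k := by
  rw [derivative_eval, Polynomial.sum_over_range' _ (by simp) _ (Nat.lt_succ_of_le hP),
    Finset.mul_sum]
  refine Finset.sum_congr rfl fun k _ => ?_
  cases k with
  | zero => simp
  | succ k => rw [Nat.add_sub_cancel, pow_succ]; ring

theorem rpow_integral_mul_le {α : Type*} [MeasurableSpace α] {μ : Measure α} {f g : α → ℝ}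
    {p : ℝ} (hp : 1 ≤ p) (hf : 0 ≤ f) (hg : 0 ≤ g) (hfm : AEStronglyMeasurable f μ)
    (hgm : AEStronglyMeasurable g μ) (hfpg : Integrable (fun x => f x ^ p * g x) μ)
    (hgi : Integrable g μ) :
    (∫ x, f x * g x ∂μ) ^ p ≤ (∫ x, f x ^ p * g x ∂μ) * (∫ x, g x ∂μ) ^ (p - 1) := by
  obtain rfl | hp1 := hp.eq_or_lt
  · simp
  have hp0 : 0 < p := one_pos.trans hp1
  set q := p.conjExponent
  have hpq : p.HolderConjugate q := .conjExponent hp1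
  have hA : 0 ≤ ∫ x, f x ^ p * g x ∂μ :=
    integral_nonneg fun x => mul_nonneg (rpow_nonneg (hf x) _) (hg x)
  have hB : 0 ≤ ∫ x, g x ∂μ := integral_nonneg hg
  -- Hölder for `f g^(1/p)` and `g^(1/q)`.
  have hsplit : ∀ x, f x * g x = f x * g x ^ (1 / p) * g x ^ (1 / q) := by
    intro x
    rw [mul_assoc, ← rpow_add' (hg x) (by rw [one_div, one_div, hpq.inv_add_inv_eq_one]; simp),
      one_div, one_div, hpq.inv_add_inv_eq_one, rpow_one]
  have hfp : ∀ x, (f x * g x ^ (1 / p)) ^ p = f x ^ p * g x := fun x => by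
    rw [mul_rpow (hf x) (rpow_nonneg (hg x) _), ← rpow_mul (hg x), one_div_mul_cancel hp0.ne',
      rpow_one]
  have hgq : ∀ x, (g x ^ (1 / q)) ^ q = g x := fun x => by
    rw [← rpow_mul (hg x), one_div_mul_cancel hpq.symm.pos.ne', rpow_one]
  have hmemf : MemLp (fun x => f x * g x ^ (1 / p)) (ENNReal.ofReal p) μ := by
    have hm : AEStronglyMeasurable (fun x => f x * g x ^ (1 / p)) μ :=
      hfm.mul (hgm.aemeasurable.pow_const _).aestronglyMeasurable
    refine (integrable_norm_rpow_iff hm (by simpa using hp0) ENNReal.ofReal_ne_top).mp ?_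
    rw [ENNReal.toReal_ofReal hp0.le]
    refine hfpg.congr (.of_forall fun x => ?_)
    dsimp only
    rw [Real.norm_of_nonneg (mul_nonneg (hf x) (rpow_nonneg (hg x) _)), hfp]
  have hmemg : MemLp (fun x => g x ^ (1 / q)) (ENNReal.ofReal q) μ := by
    have hm : AEStronglyMeasurable (fun x => g x ^ (1 / q)) μ :=
      (hgm.aemeasurable.pow_const _).aestronglyMeasurable
    refine (integrable_norm_rpow_iff hm (by simpa using hpq.symm.pos)
      ENNReal.ofReal_ne_top).mp ?_
    rw [ENNReal.toReal_ofReal hpq.symm.nonneg]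
    refine hgi.congr (.of_forall fun x => ?_)
    dsimp only
    rw [Real.norm_of_nonneg (rpow_nonneg (hg x) _), hgq]
  have hH := integral_mul_le_Lp_mul_Lq_of_nonneg hpq
    (.of_forall fun x => mul_nonneg (hf x) (rpow_nonneg (hg x) _))
    (.of_forall fun x => rpow_nonneg (hg x) _) hmemf hmemg
  simp only [hfp, hgq, ← hsplit] at hH
  calc (∫ x, f x * g x ∂μ) ^ p
      ≤ ((∫ x, f x ^ p * g x ∂μ) ^ (1 / p) * (∫ x, g x ∂μ) ^ (1 / q)) ^ p :=
        rpow_le_rpow (integral_nonneg fun x => mul_nonneg (hf x) (hg x)) hH hp0.le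
    _ = (∫ x, f x ^ p * g x ∂μ) * (∫ x, g x ∂μ) ^ (p - 1) := by
        rw [mul_rpow (rpow_nonneg hA _) (rpow_nonneg hB _), ← rpow_mul hA, ← rpow_mul hB,
          one_div_mul_cancel hp0.ne', rpow_one, one_div, ← hpq.one_sub_inv, sub_mul, one_mul,
          inv_mul_cancel₀ hp0.ne']

theorem Function.Periodic.intervalIntegral_comp_sub {E : Type*} [NormedAddCommGroup E]
    [NormedSpace ℝ E] {F : ℝ → E} {T : ℝ} (hF : Function.Periodic F T) (t : ℝ) :
    ∫ θ in (0:ℝ)..T, F (θ - t) = ∫ θ in (0:ℝ)..T, F θ := by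
  rw [intervalIntegral.integral_comp_sub_right, zero_sub, sub_eq_neg_add,
    hF.intervalIntegral_add_eq (-t) 0, zero_add]

theorem Function.Periodic.intervalIntegral_intervalIntegral_comp_sub_mul {F w : ℝ → ℝ} {T : ℝ}
    (hF : Function.Periodic F T) (hT : 0 ≤ T) (hFc : Continuous F) (hwc : Continuous w) :
    ∫ θ in (0:ℝ)..T, ∫ t in (0:ℝ)..T, F (θ - t) * w t =
      (∫ θ in (0:ℝ)..T, F θ) * ∫ t in (0:ℝ)..T, w t := by
  have hint : Integrable (Function.uncurry fun θ t => F (θ - t) * w t)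
      ((volume.restrict (Set.Ioc 0 T)).prod (volume.restrict (Set.Ioc 0 T))) := by
    rw [Measure.prod_restrict, ← Measure.volume_eq_prod]
    refine (ContinuousOn.integrableOn_compact (isCompact_Icc.prod isCompact_Icc) ?_).mono_set
      (Set.prod_mono Set.Ioc_subset_Icc_self Set.Ioc_subset_Icc_self)
    exact Continuous.continuousOn (by fun_prop)
  simp only [intervalIntegral.integral_of_le hT]
  rw [integral_integral_swap hint]
  simp only [MeasureTheory.integral_mul_const (w _) (fun θ => F (θ - _)),
    ← intervalIntegral.integral_of_le hT, hF.intervalIntegral_comp_sub]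
  exact intervalIntegral.integral_const_mul _ _

noncomputable def fejerWeight (n : ℕ) (t : ℝ) : ℝ :=
  ‖∑ a ∈ Finset.range n, cexp (a * t * I)‖ ^ 2

theorem continuous_fejerWeight (n : ℕ) : Continuous (fejerWeight n) := by
  unfold fejerWeight; fun_prop

theorem fejerWeight_nonneg (n : ℕ) (t : ℝ) : 0 ≤ fejerWeight n t := by
  unfold fejerWeight; positivity

theorem ofReal_fejerWeight (n : ℕ) (t : ℝ) :
    (fejerWeight n t : ℂ) =
      ∑ a ∈ Finset.range n, ∑ b ∈ Finset.range n, cexp (((a - b : ℤ) : ℂ) * t * I) := by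
  rw [fejerWeight, ofReal_pow, ← mul_conj', map_sum, Finset.sum_mul_sum]
  refine Finset.sum_congr rfl fun a _ => Finset.sum_congr rfl fun b _ => ?_
  rw [← exp_conj, ← Complex.exp_add]
  congr 1
  simp only [map_mul, conj_ofReal, conj_I, map_natCast]
  push_cast
  ring

theorem integral_exp_mul_fejerWeight (n j : ℕ) :
    ∫ t in (0:ℝ)..2 * π, cexp (j * t * I) * fejerWeight n t = 2 * π * (n - j : ℕ) := by
  have hexp : ∀ t : ℝ, cexp (j * t * I) * fejerWeight n t =
      ∑ a ∈ Finset.range n, ∑ b ∈ Finset.range n, cexp (((j + a - b : ℤ) : ℂ) * t * I) := by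
    intro t
    simp_rw [ofReal_fejerWeight, Finset.mul_sum, ← Complex.exp_add]
    push_cast
    ring_nf
  have hint : ∀ m : ℤ, IntervalIntegrable (fun t : ℝ => cexp (m * t * I)) volume 0 (2 * π) :=
    fun m => by apply Continuous.intervalIntegrable; fun_prop
  simp_rw [hexp]
  rw [intervalIntegral.integral_finsetSum fun a _ => by
    apply Continuous.intervalIntegrable; fun_prop]
  simp_rw [intervalIntegral.integral_finsetSum fun b _ => hint _, integral_exp_int_mul_I]
  have hcount : ∀ a b : ℕ, ((j + a - b : ℤ) = 0 ↔ b = a + j) := by intro a b; omega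
  simp_rw [hcount, Finset.sum_ite_eq', Finset.mem_range, Finset.sum_ite, Finset.sum_const_zero,
    add_zero, Finset.sum_const, nsmul_eq_mul]
  have hfilter : (Finset.range n).filter (fun a => a + j < n) = Finset.range (n - j) := by
    ext a; simp; omega
  rw [hfilter, Finset.card_range, mul_comm]

theorem integral_fejerWeight (n : ℕ) : ∫ t in (0:ℝ)..2 * π, fejerWeight n t = 2 * π * n := by
  have h := integral_exp_mul_fejerWeight n 0
  simp only [CharP.cast_eq_zero, zero_mul, Complex.exp_zero, one_mul, Nat.sub_zero,
    intervalIntegral.integral_ofReal] at h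
  exact_mod_cast h

theorem integral_eval_exp_sub_mul_exp_mul_fejerWeight {P : ℂ[X]} {n : ℕ} (hP : P.natDegree ≤ n)
    (θ : ℝ) :
    ∫ t in (0:ℝ)..2 * π, P.eval (cexp (↑(θ - t) * I)) * (cexp (n * t * I) * fejerWeight n t) =
      2 * π * (cexp (θ * I) * P.derivative.eval (cexp (θ * I))) := by
  have hexpand : ∀ t : ℝ, P.eval (cexp (↑(θ - t) * I)) * (cexp (n * t * I) * fejerWeight n t) =
      ∑ k ∈ Finset.range (n + 1), P.coeff k * cexp (θ * I) ^ k *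
        (cexp ((n - k : ℕ) * t * I) * fejerWeight n t) := by
    intro t
    rw [eval_eq_sum_range' (Nat.lt_succ_of_le hP), Finset.sum_mul]
    refine Finset.sum_congr rfl fun k hk => ?_
    have hkn : k ≤ n := Nat.lt_succ_iff.mp (Finset.mem_range.mp hk)
    rw [← Complex.exp_nat_mul, ← Complex.exp_nat_mul]
    calc _ = P.coeff k * (cexp (k * (↑(θ - t) * I)) * cexp (n * t * I)) * fejerWeight n t := by
          ring
      _ = P.coeff k * (cexp (k * (θ * I)) * cexp ((n - k : ℕ) * t * I)) * fejerWeight n t := by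
          rw [← Complex.exp_add, ← Complex.exp_add]
          push_cast [hkn]
          ring_nf
      _ = _ := by ring
  simp_rw [hexpand]
  rw [intervalIntegral.integral_finsetSum fun k _ => by
    apply Continuous.intervalIntegrable; have := continuous_fejerWeight n; fun_prop]
  simp_rw [intervalIntegral.integral_const_mul, integral_exp_mul_fejerWeight,
    mul_derivative_eval_eq_sum hP, Finset.mul_sum]
  refine Finset.sum_congr rfl fun k hk => ?_
  rw [Nat.sub_sub_self (Nat.lt_succ_iff.mp (Finset.mem_range.mp hk))]
  ring

theorem two_pi_mul_norm_derivative_eval_le {P : ℂ[X]} {n : ℕ} (hP : P.natDegree ≤ n) (θ : ℝ) :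
    2 * π * ‖P.derivative.eval (cexp (θ * I))‖ ≤
      ∫ t in (0:ℝ)..2 * π, ‖P.eval (cexp (↑(θ - t) * I))‖ * fejerWeight n t := by
  calc 2 * π * ‖P.derivative.eval (cexp (θ * I))‖
      = ‖2 * π * (cexp (θ * I) * P.derivative.eval (cexp (θ * I)))‖ := by
        simp [norm_exp_ofReal_mul_I, abs_of_pos pi_pos]
    _ = ‖∫ t in (0:ℝ)..2 * π,
          P.eval (cexp (↑(θ - t) * I)) * (cexp (n * t * I) * fejerWeight n t)‖ := by
        rw [integral_eval_exp_sub_mul_exp_mul_fejerWeight hP]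
    _ ≤ ∫ t in (0:ℝ)..2 * π,
          ‖P.eval (cexp (↑(θ - t) * I)) * (cexp (n * t * I) * fejerWeight n t)‖ :=
        intervalIntegral.norm_integral_le_integral_norm (by positivity)
    _ = ∫ t in (0:ℝ)..2 * π, ‖P.eval (cexp (↑(θ - t) * I))‖ * fejerWeight n t := by
        refine intervalIntegral.integral_congr fun t _ => ?_
        have := fejerWeight_nonneg n t
        simp only [norm_mul, norm_real, Real.norm_eq_abs, abs_of_nonneg this]
        rw [show (n : ℂ) * t * I = ((n * t : ℝ) : ℂ) * I by push_cast; ring,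
          norm_exp_ofReal_mul_I, one_mul]

theorem two_pi_mul_norm_derivative_eval_rpow_le {P : ℂ[X]} {n : ℕ} (hP : P.natDegree ≤ n)
    {p : ℝ} (hp : 1 ≤ p) (θ : ℝ) :
    (2 * π * ‖P.derivative.eval (cexp (θ * I))‖) ^ p ≤
      (2 * π * n) ^ (p - 1) *
        ∫ t in (0:ℝ)..2 * π, ‖P.eval (cexp (↑(θ - t) * I))‖ ^ p * fejerWeight n t := by
  have hp0 : 0 < p := one_pos.trans_le hp
  have h2π : 0 ≤ 2 * π := by positivity
  have hf : Continuous fun t : ℝ => ‖P.eval (cexp (↑(θ - t) * I))‖ := by fun_prop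
  have hw := continuous_fejerWeight n
  have hfpw : Continuous fun t : ℝ => ‖P.eval (cexp (↑(θ - t) * I))‖ ^ p * fejerWeight n t := by
    fun_prop (disch := exact hp0.le)
  have hHolder := rpow_integral_mul_le (μ := volume.restrict (Set.Ioc 0 (2 * π))) hp
    (fun t => norm_nonneg _) (fejerWeight_nonneg n) hf.aestronglyMeasurable
    hw.aestronglyMeasurable hfpw.integrableOn_Ioc hw.integrableOn_Ioc
  simp only [← intervalIntegral.integral_of_le h2π, integral_fejerWeight] at hHolder
  calc (2 * π * ‖P.derivative.eval (cexp (θ * I))‖) ^ p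
      ≤ (∫ t in (0:ℝ)..2 * π, ‖P.eval (cexp (↑(θ - t) * I))‖ * fejerWeight n t) ^ p :=
        rpow_le_rpow (by positivity) (two_pi_mul_norm_derivative_eval_le hP θ) hp0.le
    _ ≤ _ := hHolder.trans_eq (mul_comm _ _)

theorem integral_norm_derivative_eval_rpow_le {P : ℂ[X]} {n : ℕ} (hP : P.natDegree ≤ n) {p : ℝ}
    (hp : 1 ≤ p) :
    ∫ θ in (0:ℝ)..2 * π, ‖P.derivative.eval (cexp (θ * I))‖ ^ p ≤
      n ^ p * ∫ θ in (0:ℝ)..2 * π, ‖P.eval (cexp (θ * I))‖ ^ p := by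
  have hp0 : 0 < p := one_pos.trans_le hp
  have h2π : 0 < 2 * π := by positivity
  set W : ℝ := 2 * π * n
  set F : ℝ → ℝ := fun θ => ‖P.eval (cexp (θ * I))‖ ^ p
  have hFc : Continuous F := by simp only [F]; fun_prop (disch := exact hp0.le)
  have hFper : Function.Periodic F (2 * π) := fun θ => by
    simp only [F, ofReal_add, add_mul, Complex.exp_add, ofReal_mul, ofReal_ofNat,
      exp_two_pi_mul_I, mul_one]
  have hmass : W ^ (p - 1) * W = (2 * π) ^ p * n ^ p := by
    rw [← rpow_add_one' (by positivity) (by linarith), sub_add_cancel,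
      mul_rpow h2π.le (Nat.cast_nonneg n)]
  have hw := continuous_fejerWeight n
  have hscaled : (2 * π) ^ p * ∫ θ in (0:ℝ)..2 * π, ‖P.derivative.eval (cexp (θ * I))‖ ^ p ≤
      (2 * π) ^ p * (n ^ p * ∫ θ in (0:ℝ)..2 * π, F θ) :=
    calc (2 * π) ^ p * ∫ θ in (0:ℝ)..2 * π, ‖P.derivative.eval (cexp (θ * I))‖ ^ p
        = ∫ θ in (0:ℝ)..2 * π, (2 * π * ‖P.derivative.eval (cexp (θ * I))‖) ^ p := by
          rw [← intervalIntegral.integral_const_mul]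
          exact intervalIntegral.integral_congr fun θ _ => (mul_rpow h2π.le (norm_nonneg _)).symm
      _ ≤ ∫ θ in (0:ℝ)..2 * π,
            W ^ (p - 1) * ∫ t in (0:ℝ)..2 * π, F (θ - t) * fejerWeight n t := by
          refine intervalIntegral.integral_mono_on h2π.le ?_ ?_
            fun θ _ => two_pi_mul_norm_derivative_eval_rpow_le hP hp θ
          all_goals apply Continuous.intervalIntegrable; fun_prop (disch := exact hp0.le)
      _ = W ^ (p - 1) * ((∫ θ in (0:ℝ)..2 * π, F θ) * W) := by
          rw [intervalIntegral.integral_const_mul,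
            hFper.intervalIntegral_intervalIntegral_comp_sub_mul h2π.le hFc hw,
            integral_fejerWeight]
      _ = (2 * π) ^ p * (n ^ p * ∫ θ in (0:ℝ)..2 * π, F θ) := by
          rw [mul_comm _ W, ← mul_assoc, hmass, mul_assoc]
  exact le_of_mul_le_mul_left hscaled (by positivity)

theorem zygmund_inequality (n : ℕ) (P : Polynomial ℂ) (hP : P.natDegree = n)
    (p : ℝ) (hp : 1 ≤ p) :
    ((1 / (2 * π)) * ∫ θ in (0:ℝ)..(2 * π),
        ‖P.derivative.eval (Complex.exp (θ * Complex.I))‖ ^ p) ^ (1 / p) ≤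
      (n : ℝ) * ((1 / (2 * π)) * ∫ θ in (0:ℝ)..(2 * π),
        ‖P.eval (Complex.exp (θ * Complex.I))‖ ^ p) ^ (1 / p) := by
  have hp0 : 0 < p := one_pos.trans_le hp
  have hmean : ∀ Q : ℂ[X],
      0 ≤ (1 / (2 * π)) * ∫ θ in (0:ℝ)..(2 * π), ‖Q.eval (cexp (θ * I))‖ ^ p :=
    fun Q => mul_nonneg (by positivity)
      (intervalIntegral.integral_nonneg (by positivity) fun θ _ => by positivity)
  calc _ ≤ ((n : ℝ) ^ p * ((1 / (2 * π)) * ∫ θ in (0:ℝ)..(2 * π),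
        ‖P.eval (Complex.exp (θ * Complex.I))‖ ^ p)) ^ (1 / p) := by
        refine rpow_le_rpow (hmean _) ?_ (by positivity)
        rw [mul_left_comm]
        exact mul_le_mul_of_nonneg_left (integral_norm_derivative_eval_rpow_le hP.le hp)
          (by positivity)
    _ = _ := by
        rw [mul_rpow (by positivity) (hmean P), ← rpow_mul (Nat.cast_nonneg n),
          mul_one_div_cancel hp0.ne', rpow_one]
end

section
/- If P is a complex polynomial of degree n, then for every complex number α with |α| > 1 and every z with |z| = 1, |D_α P(z)| ≤ n|α| · max_{|w|=1} |P(w)|. -/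
/-!
Let `M = max_{|w|=1} |P(w)|`. By the maximum modulus principle applied to the reversed
polynomial, `|P(w)| ≤ M |w|ⁿ` for `|w| ≥ 1` and `|lc P| ≤ M`; hence for `|c| > M` the polynomial
`P - c zⁿ` has degree `n` and all its zeros in the closed unit disc. Laguerre's theorem then says
that its polar derivative has no zero in `|w| > 1`. As `D_α zⁿ = n α zⁿ⁻¹`, this means
`D_α P(w) ≠ c n α wⁿ⁻¹` for all `|c| > M`, i.e. `|D_α P(w)| ≤ n |α| M |w|ⁿ⁻¹` for `|w| > 1`,
and the bound passes to the unit circle by continuity.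
-/

open Polynomial ComplexConjugate

section PolarDerivative

variable {R : Type*} [CommRing R]

/-- `D_α P` with the degree `n` of `P` passed as a parameter, so that `polarDerivative n α` is
linear. -/
noncomputable def polarDerivative (n : ℕ) (α : R) : R[X] →ₗ[R] R[X] :=
  (n : R) • LinearMap.id + LinearMap.mulLeft R (C α - X) ∘ₗ derivative

@[simp]
theorem eval_polarDerivative (n : ℕ) (α : R) (P : R[X]) (z : R) :
    (polarDerivative n α P).eval z = n * P.eval z + (α - z) * P.derivative.eval z := by
  simp [polarDerivative]

theorem eval_polarDerivative_X_pow (n : ℕ) (α z : R) :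
    (polarDerivative n α (X ^ n)).eval z = n * α * z ^ (n - 1) := by
  rcases n with _ | n
  · simp
  · rw [eval_polarDerivative, derivative_X_pow]
    simp only [eval_pow, eval_X, eval_mul, eval_C, Nat.add_sub_cancel]
    ring

end PolarDerivative

theorem sq_norm_sub_sub_sq_norm_conj_mul_sub_one (z w : ℂ) :
    ‖z - w‖ ^ 2 - ‖conj z * w - 1‖ ^ 2 = (‖z‖ ^ 2 - 1) * (1 - ‖w‖ ^ 2) := by
  simp only [Complex.sq_norm, Complex.normSq_apply, Complex.sub_re, Complex.sub_im,
    Complex.mul_re, Complex.mul_im, Complex.conj_re, Complex.conj_im, Complex.one_re,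
    Complex.one_im]
  ring

/-- For `‖z‖ > 1`, the map `w ↦ (z - w)⁻¹` sends the closed unit disc onto the closed disc
with centre `conj z / (‖z‖² - 1)` and radius `(‖z‖² - 1)⁻¹`. -/
theorem norm_inv_sub_sub_le_iff {z w : ℂ} (hz : 1 < ‖z‖) (hzw : z ≠ w) :
    ‖(z - w)⁻¹ - conj z / ((‖z‖ ^ 2 - 1 : ℝ) : ℂ)‖ ≤ (‖z‖ ^ 2 - 1)⁻¹ ↔ ‖w‖ ≤ 1 := by
  set s : ℝ := ‖z‖ ^ 2 - 1 with hs
  have hs0 : 0 < s := by nlinarith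
  have hzw' : z - w ≠ 0 := sub_ne_zero.mpr hzw
  have hs0' : (s : ℂ) ≠ 0 := Complex.ofReal_ne_zero.mpr hs0.ne'
  have hdiff : (z - w)⁻¹ - conj z / (s : ℂ) = (conj z * w - 1) / (s * (z - w)) := by
    have : (s : ℂ) = conj z * z - 1 := by rw [Complex.conj_mul', hs]; push_cast; ring
    field_simp
    rw [this]
    ring
  rw [hdiff, norm_div, norm_mul, Complex.norm_real, Real.norm_of_nonneg hs0.le,
    div_le_iff₀ (by positivity), inv_mul_cancel_left₀ hs0.ne',
    ← sq_le_sq₀ (norm_nonneg _) (norm_nonneg _), ← sub_nonneg,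
    sq_norm_sub_sub_sq_norm_conj_mul_sub_one, ← hs, mul_nonneg_iff_of_pos_left hs0, sub_nonneg,
    sq_le_one_iff₀ (norm_nonneg _)]

theorem norm_multiset_sum_sub_card_smul_le {E : Type*} [SeminormedAddCommGroup E]
    (s : Multiset E) (c : E) {ρ : ℝ} (h : ∀ x ∈ s, ‖x - c‖ ≤ ρ) :
    ‖s.sum - s.card • c‖ ≤ s.card * ρ := by
  induction s using Multiset.induction_on with
  | empty => simp
  | cons a t ih =>
    have ht := ih fun x hx => h x (Multiset.mem_cons_of_mem hx)
    have ha := h a (Multiset.mem_cons_self a t)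
    calc ‖(a ::ₘ t).sum - (a ::ₘ t).card • c‖ = ‖(a - c) + (t.sum - t.card • c)‖ := by
          rw [Multiset.sum_cons, Multiset.card_cons, succ_nsmul]; abel_nf
      _ ≤ ‖a - c‖ + ‖t.sum - t.card • c‖ := norm_add_le _ _
      _ ≤ (a ::ₘ t).card * ρ := by rw [Multiset.card_cons]; push_cast; linarith

/-- Laguerre: `D_α R (z) = 0` says that `(z - α)⁻¹` is the mean of the `(z - r)⁻¹` over the roots
`r` of `R`; these lie in the disc of `norm_inv_sub_sub_le_iff`, hence so does their mean,
which forces `‖α‖ ≤ 1`. -/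
theorem eval_polarDerivative_ne_zero {R : ℂ[X]} {n : ℕ} (hn : 0 < n) (hR : R.natDegree = n)
    (hroots : ∀ r ∈ R.roots, ‖r‖ ≤ 1) {α z : ℂ} (hα : 1 < ‖α‖) (hz : 1 < ‖z‖) :
    (polarDerivative n α R).eval z ≠ 0 := by
  have hR0 : R ≠ 0 := by rintro rfl; simp at hR; omega
  have hzroot : ∀ r ∈ R.roots, z ≠ r := fun r hr h => (hroots r hr).not_gt (h ▸ hz)
  have hRz : R.eval z ≠ 0 := fun h => hzroot z ((mem_roots hR0).mpr h) rfl
  have hcard : R.roots.card = n := hR ▸ (splits_iff_card_roots.mp (IsAlgClosed.splits R))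
  set T := (R.roots.map fun r => (z - r)⁻¹).sum
  have hlog : R.derivative.eval z = R.eval z * T := by
    simpa only [one_div] using (IsAlgClosed.splits R).eval_derivative_eq_eval_mul_sum hRz
  intro h
  have hT : (n : ℂ) + (α - z) * T = 0 := by
    rw [eval_polarDerivative, hlog] at h
    exact (mul_eq_zero.mp (by linear_combination h)).resolve_left hRz
  have hαz : z - α ≠ 0 := by
    intro h'; rw [← neg_sub, h'] at hT; simp at hT; omega
  set s : ℝ := ‖z‖ ^ 2 - 1
  set c : ℂ := conj z / (s : ℂ)
  have hmean : (n : ℂ) * ((z - α)⁻¹ - c) = T - n • c := by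
    rw [nsmul_eq_mul, mul_sub, ← div_eq_mul_inv, div_eq_of_eq_mul hαz]
    linear_combination hT
  have hbound : ‖T - n • c‖ ≤ n * s⁻¹ := by
    have := norm_multiset_sum_sub_card_smul_le (R.roots.map fun r => (z - r)⁻¹) c (ρ := s⁻¹) ?_
    · simpa only [Multiset.card_map, hcard] using this
    simp only [Multiset.mem_map]
    rintro _ ⟨r, hr, rfl⟩
    exact (norm_inv_sub_sub_le_iff hz (hzroot r hr)).mpr (hroots r hr)
  rw [← hmean, norm_mul, Complex.norm_natCast] at hbound
  have hα' := (norm_inv_sub_sub_le_iff hz (sub_ne_zero.mp hαz)).mp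
    (le_of_mul_le_mul_left hbound (by exact_mod_cast hn))
  linarith

section MaximumModulus

variable {P : ℂ[X]} {M : ℝ}

theorem norm_eval_reverse_inv_mul_pow {u : ℂ} (hu : u ≠ 0) :
    ‖P.reverse.eval u⁻¹‖ * ‖u‖ ^ P.natDegree = ‖P.eval u‖ := by
  let : Invertible u := invertibleOfNonzero hu
  rw [← norm_pow, ← norm_mul, ← invOf_eq_inv]
  exact congrArg norm (eval₂_reverse_mul_pow (RingHom.id ℂ) u P)

variable (hM : ∀ w : ℂ, ‖w‖ = 1 → ‖P.eval w‖ ≤ M)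
include hM

theorem norm_eval_reverse_le {v : ℂ} (hv : ‖v‖ ≤ 1) : ‖P.reverse.eval v‖ ≤ M := by
  have hfrontier : ∀ w ∈ frontier (Metric.ball (0 : ℂ) 1), ‖P.reverse.eval w‖ ≤ M := by
    intro w hw
    rw [frontier_ball (0 : ℂ) one_ne_zero, mem_sphere_zero_iff_norm] at hw
    have hw0 : w⁻¹ ≠ 0 := inv_ne_zero (norm_ne_zero_iff.mp (by rw [hw]; exact one_ne_zero))
    have hwinv : ‖w⁻¹‖ = 1 := by rw [norm_inv, hw, inv_one]
    have := norm_eval_reverse_inv_mul_pow (P := P) hw0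
    rw [inv_inv, hwinv, one_pow, mul_one] at this
    exact this ▸ hM _ hwinv
  refine Complex.norm_le_of_forall_mem_frontier_norm_le Metric.isBounded_ball
    P.reverse.differentiable.diffContOnCl hfrontier ?_
  rwa [closure_ball (0 : ℂ) one_ne_zero, mem_closedBall_zero_iff]

theorem norm_leadingCoeff_le : ‖P.leadingCoeff‖ ≤ M := by
  simpa only [← coeff_zero_reverse, coeff_zero_eq_eval_zero] using
    norm_eval_reverse_le hM (v := 0) (by simp)

theorem norm_eval_le_mul_norm_pow {w : ℂ} (hw : 1 ≤ ‖w‖) :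
    ‖P.eval w‖ ≤ M * ‖w‖ ^ P.natDegree := by
  have hw0 : w ≠ 0 := norm_ne_zero_iff.mp (by linarith)
  rw [← norm_eval_reverse_inv_mul_pow hw0]
  gcongr
  exact norm_eval_reverse_le hM (by rw [norm_inv]; exact inv_le_one_of_one_le₀ hw)

end MaximumModulus

theorem norm_le_one_of_mem_roots_sub_smul_X_pow {P : ℂ[X]} {n : ℕ} {M : ℝ} {c : ℂ}
    (hgrow : ∀ w : ℂ, 1 ≤ ‖w‖ → ‖P.eval w‖ ≤ M * ‖w‖ ^ n) (hc : M < ‖c‖) {r : ℂ}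
    (hr : r ∈ (P - c • X ^ n).roots) : ‖r‖ ≤ 1 := by
  by_contra! hr1
  have hPr : P.eval r = c * r ^ n := by
    have := isRoot_of_mem_roots hr
    simp only [IsRoot, eval_sub, eval_smul, eval_pow, eval_X, smul_eq_mul] at this
    linear_combination this
  have := hgrow r hr1.le
  rw [hPr, norm_mul, norm_pow] at this
  have : 0 < ‖r‖ ^ n := by positivity
  nlinarith

theorem natDegree_sub_smul_X_pow {R : Type*} [Ring R] {P : R[X]} {n : ℕ} (hP : P.natDegree = n) {c : R}
    (hc : c ≠ P.leadingCoeff) : (P - c • X ^ n).natDegree = n := by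
  apply natDegree_eq_of_le_of_coeff_ne_zero
  · refine (natDegree_sub_le _ _).trans (max_le hP.le ?_)
    exact (natDegree_smul_le _ _).trans (natDegree_X_pow_le n)
  · rw [coeff_sub, coeff_smul, coeff_X_pow_self, smul_eq_mul, mul_one, ← hP]
    exact sub_ne_zero.mpr hc.symm

section Bound

variable {P : ℂ[X]} {n : ℕ} {M : ℝ} {α w : ℂ}

theorem eval_polarDerivative_ne_mul_eval_polarDerivative_X_pow (hn : 0 < n)
    (hP : P.natDegree = n) (hM : ∀ w : ℂ, ‖w‖ = 1 → ‖P.eval w‖ ≤ M) (hα : 1 < ‖α‖)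
    (hw : 1 < ‖w‖) {c : ℂ} (hc : M < ‖c‖) :
    (polarDerivative n α P).eval w ≠ c * (polarDerivative n α (X ^ n)).eval w := by
  have hc' : c ≠ P.leadingCoeff := by
    rintro rfl; exact (norm_leadingCoeff_le hM).not_gt hc
  have hgrow : ∀ w : ℂ, 1 ≤ ‖w‖ → ‖P.eval w‖ ≤ M * ‖w‖ ^ n :=
    fun w hw => hP ▸ norm_eval_le_mul_norm_pow hM hw
  have := eval_polarDerivative_ne_zero hn (natDegree_sub_smul_X_pow hP hc')
    (fun r hr => norm_le_one_of_mem_roots_sub_smul_X_pow hgrow hc hr) hα hw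
  rwa [map_sub, map_smul, eval_sub, eval_smul, smul_eq_mul, sub_ne_zero] at this

theorem norm_eval_polarDerivative_le (hP : P.natDegree = n)
    (hM : ∀ w : ℂ, ‖w‖ = 1 → ‖P.eval w‖ ≤ M) (hα : 1 < ‖α‖) (hw : 1 < ‖w‖) :
    ‖(polarDerivative n α P).eval w‖ ≤ n * ‖α‖ * M * ‖w‖ ^ (n - 1) := by
  rcases Nat.eq_zero_or_pos n with rfl | hn
  · rw [eq_C_of_natDegree_eq_zero hP]
    simp
  have hM0 : 0 < M := (norm_pos_iff.mpr (leadingCoeff_ne_zero.mpr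
    (ne_zero_of_natDegree_gt (hP ▸ hn)))).trans_le (norm_leadingCoeff_le hM)
  set m := (polarDerivative n α (X ^ n)).eval w with hm_def
  have hm : ‖m‖ = n * ‖α‖ * ‖w‖ ^ (n - 1) := by
    rw [hm_def, eval_polarDerivative_X_pow, norm_mul, norm_mul, norm_pow, Complex.norm_natCast]
  have hm0 : 0 < ‖m‖ := by rw [hm]; positivity
  by_contra! h
  refine eval_polarDerivative_ne_mul_eval_polarDerivative_X_pow hn hP hM hα hw
    (c := (polarDerivative n α P).eval w / m) ?_ (div_mul_cancel₀ _ (norm_pos_iff.mp hm0)).symm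
  rw [norm_div, lt_div_iff₀ hm0, hm]
  linarith

end Bound

theorem aziz_shah_polar (n : ℕ) (P : Polynomial ℂ) (hP : P.natDegree = n)
    (α : ℂ) (hα : 1 < ‖α‖) (z : ℂ) (hz : ‖z‖ = 1) :
    ‖(n : ℂ) * P.eval z + (α - z) * P.derivative.eval z‖ ≤
      (n : ℝ) * ‖α‖ *
        sSup ((fun w => ‖P.eval w‖) '' {w : ℂ | ‖w‖ = 1}) := by
  set M := sSup ((fun w => ‖P.eval w‖) '' {w : ℂ | ‖w‖ = 1})
  have hM : ∀ w : ℂ, ‖w‖ = 1 → ‖P.eval w‖ ≤ M := by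
    have hcompact : IsCompact {w : ℂ | ‖w‖ = 1} := by
      convert isCompact_sphere (0 : ℂ) 1
      ext; simp
    exact fun w hw => le_csSup ((hcompact.image (by fun_prop)).bddAbove) ⟨w, hw, rfl⟩
  have hz' : z ∈ closure (Metric.closedBall (0 : ℂ) 1)ᶜ := by
    rw [closure_compl, interior_closedBall _ one_ne_zero]
    simp [hz]
  have := le_on_closure (fun w hw => norm_eval_polarDerivative_le hP hM hα
    (by simpa using hw)) (by fun_prop) (by fun_prop) hz'
  simpa [hz] using this
end

section
/- If P is a complex polynomial of degree n, then for every complex number α with |α| ≥ 1 and every real p ≥ 1, (∫₀^{2π} |D_α P(e^{iθ})|^p dθ)^{1/p} ≤ n(|α|+1) · (∫₀^{2π} |P(e^{iθ})|^p dθ)^{1/p}. -/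
/-!
Write `D_α P = α P' + (n P - z P')`. By Minkowski's inequality it suffices to bound both
`‖P'‖_p` and `‖n P - z P'‖_p` by `n ‖P‖_p` on the unit circle. The first bound is Zygmund's
`L^p` Bernstein inequality, which follows from M. Riesz's interpolation formula
`4 n z P'(z) = ∑ₖ wₖ P(ωₖ z)` over the `2n`-th roots `ωₖ` of `-1`, whose weights satisfy
`∑ₖ |wₖ| = 4 n²`; Minkowski and rotation invariance of `‖·‖_p` then give `‖P'‖_p ≤ n ‖P‖_p`.
The second bound is the first applied to `Q(z) = zⁿ conj (P (1 / conj z))`, for which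
`|Q| = |P|` and `|Q'| = |n P - z P'|` on the unit circle.
-/

open Polynomial Real

open Finset

section RieszInterpolation

variable {K : Type*} [Field K] {n : ℕ} {ζ : K}

lemma IsPrimitiveRoot.pow_two_mul_eq_neg_one (hζ : IsPrimitiveRoot ζ (4 * n)) (hn : n ≠ 0) :
    ζ ^ (2 * n) = -1 := by
  have h := hζ.pow_of_dvd (p := 2 * n) (by omega) ⟨2, by ring⟩
  rw [show 4 * n = 2 * (2 * n) by ring, Nat.mul_div_cancel _ (by omega)] at h
  exact h.eq_neg_one_of_two_right

lemma IsPrimitiveRoot.odd_pow_pow_two_mul_eq_neg_one (hζ : IsPrimitiveRoot ζ (4 * n))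
    (hn : n ≠ 0) (k : ℕ) : (ζ ^ (2 * k + 1)) ^ (2 * n) = -1 := by
  rw [← pow_mul, show (2 * k + 1) * (2 * n) = 4 * n * k + 2 * n by ring, pow_add, pow_mul,
    hζ.pow_eq_one, one_pow, one_mul, hζ.pow_two_mul_eq_neg_one hn]

lemma sum_odd_pow_pow_eq_zero (hζ : IsPrimitiveRoot ζ (4 * n)) {t : ℕ} (ht : ¬ 2 * n ∣ t) :
    ∑ k ∈ range (2 * n), (ζ ^ (2 * k + 1)) ^ t = 0 := by
  have hne : ζ ^ (2 * t) ≠ 1 := by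
    rw [Ne, hζ.pow_eq_one_iff_dvd, show 4 * n = 2 * (2 * n) by ring]
    exact fun h => ht (Nat.dvd_of_mul_dvd_mul_left two_pos h)
  have hsum : (∑ k ∈ range (2 * n), (ζ ^ (2 * t)) ^ k) * (ζ ^ (2 * t) - 1) = 0 := by
    rw [geom_sum_mul, ← pow_mul, show 2 * t * (2 * n) = 4 * n * t by ring, pow_mul,
      hζ.pow_eq_one, one_pow, sub_self]
  have hgeom := (mul_eq_zero.mp hsum).resolve_right (sub_ne_zero.mpr hne)
  calc ∑ k ∈ range (2 * n), (ζ ^ (2 * k + 1)) ^ t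
      = ζ ^ t * ∑ k ∈ range (2 * n), (ζ ^ (2 * t)) ^ k := by
        rw [mul_sum]; refine sum_congr rfl fun k _ => ?_
        rw [← pow_mul, ← pow_mul, ← pow_add]; ring_nf
    _ = 0 := by rw [hgeom, mul_zero]

lemma sum_odd_pow_pow_two_mul (hζ : IsPrimitiveRoot ζ (4 * n)) (hn : n ≠ 0) (c : ℕ) :
    ∑ k ∈ range (2 * n), (ζ ^ (2 * k + 1)) ^ (2 * n * c) = 2 * n * (-1) ^ c := by
  simp [pow_mul, hζ.odd_pow_pow_two_mul_eq_neg_one hn]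

lemma sum_odd_pow_pow_mul_geom_sum (hζ : IsPrimitiveRoot ζ (4 * n)) (hn : n ≠ 0) {s c : ℕ}
    (hsc : s ≤ 2 * n * c) (hcs : 2 * n * c < s + 2 * n) :
    ∑ k ∈ range (2 * n), (ζ ^ (2 * k + 1)) ^ s * ∑ j ∈ range (2 * n), (ζ ^ (2 * k + 1)) ^ j =
      2 * n * (-1) ^ c := by
  have hwindow : ∀ j < 2 * n, 2 * n ∣ s + j → j = 2 * n * c - s := by
    rintro j hj ⟨d, hd⟩
    have hdc : d < c + 1 := Nat.lt_of_mul_lt_mul_left (a := 2 * n) (by rw [mul_add]; omega)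
    have hcd : c < d + 1 := Nat.lt_of_mul_lt_mul_left (a := 2 * n) (by rw [mul_add]; omega)
    obtain rfl : d = c := by omega
    omega
  simp_rw [mul_sum, ← pow_add]
  rw [sum_comm, sum_eq_single (2 * n * c - s)]
  · rw [show s + (2 * n * c - s) = 2 * n * c by omega, sum_odd_pow_pow_two_mul hζ hn]
  · intro j hj hne
    exact sum_odd_pow_pow_eq_zero hζ fun hdvd => hne (hwindow j (mem_range.mp hj) hdvd)
  · intro h; exact absurd (mem_range.mpr (by omega)) h

lemma sum_odd_pow_pow_mul_geom_sum_sq (hζ : IsPrimitiveRoot ζ (4 * n)) (hn : n ≠ 0) {r : ℕ}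
    (hr : 1 ≤ r) (hr' : r ≤ 2 * n + 1) :
    ∑ k ∈ range (2 * n), (ζ ^ (2 * k + 1)) ^ r * (∑ j ∈ range (2 * n), (ζ ^ (2 * k + 1)) ^ j) ^ 2 =
      4 * n * (r - n - 1) := by
  obtain ⟨b, rfl⟩ : ∃ b, r = b + 1 := ⟨r - 1, by omega⟩
  obtain ⟨a, hab⟩ : ∃ a, a + b = 2 * n := ⟨2 * n - b, by omega⟩
  have hexpand : ∀ w : K, w ^ (b + 1) * (∑ j ∈ range (2 * n), w ^ j) ^ 2 =
      ∑ i ∈ range (2 * n), w ^ (b + 1 + i) * ∑ j ∈ range (2 * n), w ^ j := fun w => by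
    rw [sq, ← mul_assoc, mul_sum _ _ (w ^ (b + 1)), sum_mul]; simp only [pow_add]
  simp_rw [hexpand]
  have hsplit : ∀ f : ℕ → K, ∑ i ∈ range (2 * n), f i =
      ∑ i ∈ range a, f i + ∑ i ∈ range b, f (a + i) := fun f => by rw [← hab, sum_range_add]
  rw [sum_comm, hsplit]
  have hlow : ∀ i ∈ range a, ∑ k ∈ range (2 * n), (ζ ^ (2 * k + 1)) ^ (b + 1 + i) *
      ∑ j ∈ range (2 * n), (ζ ^ (2 * k + 1)) ^ j = -(2 * n) := fun i hi => by
    have := mem_range.mp hi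
    rw [sum_odd_pow_pow_mul_geom_sum hζ hn (c := 1) (by omega) (by omega)]; ring
  have hhigh : ∀ i ∈ range b, ∑ k ∈ range (2 * n), (ζ ^ (2 * k + 1)) ^ (b + 1 + (a + i)) *
      ∑ j ∈ range (2 * n), (ζ ^ (2 * k + 1)) ^ j = 2 * n := fun i hi => by
    have := mem_range.mp hi
    rw [sum_odd_pow_pow_mul_geom_sum hζ hn (c := 2) (by omega) (by omega)]; ring
  rw [sum_congr rfl hlow, sum_congr rfl hhigh]
  simp only [sum_const, card_range, nsmul_eq_mul]
  have hab' : (a : K) + b = 2 * n := by rw [← Nat.cast_add, hab]; push_cast; ring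
  push_cast
  linear_combination (-2 * (n : K)) * hab'

/-- For `ζ = exp (2πi / 4n)` and `ωₖ = ζ ^ (2k+1) = exp (i θₖ)`, this is the classical weight
`i (-1)^(k+1) / sin² (θₖ / 2)` of M. Riesz's formula, written without division. -/
def rieszWeight (ζ : K) (n k : ℕ) : K :=
  (ζ ^ (2 * k + 1)) ^ (n + 1) * (∑ j ∈ range (2 * n), (ζ ^ (2 * k + 1)) ^ j) ^ 2

lemma sum_rieszWeight_mul_pow (hζ : IsPrimitiveRoot ζ (4 * n)) (hn : n ≠ 0) {m : ℕ} (hm : m ≤ n) :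
    ∑ k ∈ range (2 * n), rieszWeight ζ n k * (ζ ^ (2 * k + 1)) ^ m = 4 * n * m := by
  have h := sum_odd_pow_pow_mul_geom_sum_sq hζ hn (r := n + 1 + m) (by omega) (by omega)
  push_cast at h
  rw [← show (4 * n * (n + 1 + m - n - 1) : K) = 4 * n * m by ring, ← h]
  exact sum_congr rfl fun k _ => by rw [rieszWeight, pow_add]; ring

theorem riesz_interpolation (hζ : IsPrimitiveRoot ζ (4 * n)) (hn : n ≠ 0) {P : K[X]}
    (hP : P.natDegree ≤ n) (z : K) :
    ∑ k ∈ range (2 * n), rieszWeight ζ n k * P.eval (ζ ^ (2 * k + 1) * z) =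
      4 * n * (z * P.derivative.eval z) := by
  refine induction_with_natDegree_le (fun P => ∑ k ∈ range (2 * n),
    rieszWeight ζ n k * P.eval (ζ ^ (2 * k + 1) * z) = 4 * n * (z * P.derivative.eval z)) n
    (by simp) (fun m r _ hm => ?_) (fun f g _ _ hf hg => ?_) P hP
  · have hsum := sum_rieszWeight_mul_pow hζ hn hm
    simp only [eval_mul, eval_C, eval_pow, eval_X, derivative_C_mul_X_pow, mul_pow]
    calc ∑ k ∈ range (2 * n), rieszWeight ζ n k * (r * ((ζ ^ (2 * k + 1)) ^ m * z ^ m))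
        = r * z ^ m * ∑ k ∈ range (2 * n), rieszWeight ζ n k * (ζ ^ (2 * k + 1)) ^ m := by
          rw [mul_sum]; exact sum_congr rfl fun k _ => by ring
      _ = 4 * n * (z * (r * m * z ^ (m - 1))) := by
          rw [hsum]
          cases m with
          | zero => simp
          | succ m => rw [Nat.add_sub_cancel, pow_succ]; ring
  · simp only [eval_add, derivative_add, mul_add, sum_add_distrib, hf, hg]

end RieszInterpolation

section CircleLpNorm

open Complex MeasureTheory

noncomputable def circleLpNorm (p : ℝ) (f : ℂ → ℂ) : ℝ :=
  (∫ θ in (0:ℝ)..(2 * π), ‖f (exp (θ * I))‖ ^ p) ^ (1 / p)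

variable {p : ℝ} {f g : ℂ → ℂ}

lemma circleLpNorm_nonneg (p : ℝ) (f : ℂ → ℂ) : 0 ≤ circleLpNorm p f :=
  rpow_nonneg (intervalIntegral.integral_nonneg two_pi_pos.le fun _ _ => by positivity) _

lemma circleLpNorm_congr_norm (h : ∀ z, ‖z‖ = 1 → ‖f z‖ = ‖g z‖) :
    circleLpNorm p f = circleLpNorm p g := by
  simp only [circleLpNorm, h _ (norm_exp_ofReal_mul_I _)]

lemma circleLpNorm_zero (hp : p ≠ 0) : circleLpNorm p (fun _ => 0) = 0 := by
  simp [circleLpNorm, zero_rpow hp, zero_rpow (inv_ne_zero hp)]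

lemma circleLpNorm_const_mul (hp : p ≠ 0) (c : ℂ) (f : ℂ → ℂ) :
    circleLpNorm p (fun z => c * f z) = ‖c‖ * circleLpNorm p f := by
  simp only [circleLpNorm, norm_mul, mul_rpow (norm_nonneg _) (norm_nonneg _),
    intervalIntegral.integral_const_mul]
  rw [mul_rpow (by positivity) (intervalIntegral.integral_nonneg two_pi_pos.le
    fun _ _ => by positivity), ← rpow_mul (norm_nonneg c), mul_one_div_cancel hp, rpow_one]

lemma circleLpNorm_comp_mul_left {ω : ℂ} (hω : ‖ω‖ = 1) (f : ℂ → ℂ) :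
    circleLpNorm p (fun z => f (ω * z)) = circleLpNorm p f := by
  have hrot : ∀ θ : ℝ, ω * exp (θ * I) = exp (↑(θ + arg ω) * I) := fun θ => by
    conv_lhs => rw [← norm_mul_exp_arg_mul_I ω, hω]
    rw [ofReal_one, one_mul, ← Complex.exp_add]; push_cast; ring_nf
  have hper : Function.Periodic (fun θ : ℝ => ‖f (exp (θ * I))‖ ^ p) (2 * π) := fun θ => by
    push_cast
    rw [add_mul, Complex.exp_add, exp_two_pi_mul_I, mul_one]
  simp only [circleLpNorm, hrot]
  rw [intervalIntegral.integral_comp_add_right (fun θ => ‖f (exp (θ * I))‖ ^ p),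
    zero_add, add_comm (2 * π), hper.intervalIntegral_add_eq (arg ω) 0, zero_add]

lemma eLpNorm'_eq_ofReal_circleLpNorm (hp : 0 < p) (hf : Continuous f) :
    eLpNorm' (fun θ : ℝ => f (exp (θ * I))) p (volume.restrict (Set.Ioc 0 (2 * π))) =
      ENNReal.ofReal (circleLpNorm p f) := by
  have hcont : Continuous fun θ : ℝ => ‖f (exp (θ * I))‖ ^ p :=
    (by fun_prop : Continuous fun θ : ℝ => ‖f (exp (θ * I))‖).rpow_const fun _ => Or.inr hp.le
  rw [eLpNorm', circleLpNorm, intervalIntegral.integral_of_le two_pi_pos.le,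
    ← ENNReal.ofReal_rpow_of_nonneg (setIntegral_nonneg measurableSet_Ioc fun _ _ => by positivity)
      (by positivity),
    ofReal_integral_eq_lintegral_ofReal hcont.integrableOn_Ioc
      (Filter.Eventually.of_forall fun _ => by positivity)]
  congr 1
  refine lintegral_congr fun θ => ?_
  rw [← ENNReal.ofReal_rpow_of_nonneg (norm_nonneg _) hp.le, ofReal_norm]

lemma circleLpNorm_add_le (hp : 1 ≤ p) (hf : Continuous f) (hg : Continuous g) :
    circleLpNorm p (fun z => f z + g z) ≤ circleLpNorm p f + circleLpNorm p g := by
  have hp0 : 0 < p := by linarith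
  have hf0 := circleLpNorm_nonneg p f
  have hg0 := circleLpNorm_nonneg p g
  rw [← ENNReal.ofReal_le_ofReal_iff (add_nonneg hf0 hg0), ENNReal.ofReal_add hf0 hg0,
    ← eLpNorm'_eq_ofReal_circleLpNorm hp0 hf, ← eLpNorm'_eq_ofReal_circleLpNorm hp0 hg,
    ← eLpNorm'_eq_ofReal_circleLpNorm (f := fun z => f z + g z) hp0 (hf.add hg)]
  exact eLpNorm'_add_le (by fun_prop) (by fun_prop) hp

lemma circleLpNorm_sum_le {ι : Type*} (s : Finset ι) {f : ι → ℂ → ℂ}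
    (hf : ∀ i ∈ s, Continuous (f i)) (hp : 1 ≤ p) :
    circleLpNorm p (fun z => ∑ i ∈ s, f i z) ≤ ∑ i ∈ s, circleLpNorm p (f i) := by
  have hp0 : 0 < p := by linarith
  rw [← ENNReal.ofReal_le_ofReal_iff (Finset.sum_nonneg fun i _ => circleLpNorm_nonneg p (f i)),
    ENNReal.ofReal_sum_of_nonneg fun i _ => circleLpNorm_nonneg p (f i),
    ← eLpNorm'_eq_ofReal_circleLpNorm hp0 (continuous_finsetSum s hf),
    Finset.sum_congr rfl fun i hi => (eLpNorm'_eq_ofReal_circleLpNorm hp0 (hf i hi)).symm]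
  have hexp : Continuous fun θ : ℝ => exp (θ * I) := by fun_prop
  have hsum : (fun θ : ℝ => ∑ i ∈ s, f i (exp (θ * I))) =
      ∑ i ∈ s, fun θ : ℝ => f i (exp (θ * I)) := by
    ext θ; simp [Finset.sum_apply]
  rw [hsum]
  exact eLpNorm'_sum_le (fun i hi => ((hf i hi).comp hexp).aestronglyMeasurable) hp

end CircleLpNorm

section Bernstein

open Complex ComplexConjugate

lemma conj_geom_sum_of_pow_eq_neg_one {ω : ℂ} {N : ℕ} (hω : ‖ω‖ = 1) (h : ω ^ N = -1) :
    conj (∑ j ∈ range N, ω ^ j) = -(ω * ∑ j ∈ range N, ω ^ j) := by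
  set G := ∑ j ∈ range N, ω ^ j
  have hG : G * (ω - 1) = -2 := by rw [geom_sum_mul, h]; norm_num
  have hGc : conj G * (conj ω - 1) = -2 := by
    simpa [map_ofNat] using congrArg conj hG
  have hunit : conj ω * ω = 1 := by
    rw [mul_comm, mul_conj, normSq_eq_norm_sq, hω]; norm_num
  have hne : (conj ω - 1) * (ω - 1) ≠ 0 := by
    refine mul_ne_zero ?_ ?_ <;> rintro h0
    · rw [h0, mul_zero] at hGc; norm_num at hGc
    · rw [h0, mul_zero] at hG; norm_num at hG
  apply mul_right_cancel₀ hne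
  linear_combination (ω - 1) * hGc + ω * (conj ω - 1) * hG - 2 * hunit

lemma norm_geom_sum_sq_of_pow_eq_neg_one {ω : ℂ} {N : ℕ} (hω : ‖ω‖ = 1) (h : ω ^ N = -1) :
    ((‖∑ j ∈ range N, ω ^ j‖ ^ 2 : ℝ) : ℂ) = -(ω * (∑ j ∈ range N, ω ^ j) ^ 2) := by
  rw [ofReal_pow, ← mul_conj', conj_geom_sum_of_pow_eq_neg_one hω h]; ring

lemma sum_norm_rieszWeight {n : ℕ} {ζ : ℂ} (hζ : IsPrimitiveRoot ζ (4 * n)) (hn : n ≠ 0) :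
    ∑ k ∈ range (2 * n), ‖rieszWeight ζ n k‖ = 4 * n ^ 2 := by
  have hζ1 : ‖ζ‖ = 1 := hζ.norm'_eq_one (by omega)
  have hnorm : ∀ k, ‖rieszWeight ζ n k‖ = ‖∑ j ∈ range (2 * n), (ζ ^ (2 * k + 1)) ^ j‖ ^ 2 :=
    fun k => by simp only [rieszWeight, norm_mul, norm_pow, hζ1, one_pow, one_mul]
  have h := sum_odd_pow_pow_mul_geom_sum_sq hζ hn (r := 1) le_rfl (by omega)
  simp only [pow_one] at h
  have hC : ((∑ k ∈ range (2 * n), ‖rieszWeight ζ n k‖ : ℝ) : ℂ) = 4 * n ^ 2 := by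
    simp only [hnorm, ofReal_sum, sum_neg_distrib, norm_geom_sum_sq_of_pow_eq_neg_one
      (by rw [norm_pow, hζ1, one_pow]) (hζ.odd_pow_pow_two_mul_eq_neg_one hn _), h]
    push_cast; ring
  exact_mod_cast hC

theorem circleLpNorm_derivative_le {p : ℝ} {n : ℕ} {P : ℂ[X]} (hP : P.natDegree ≤ n)
    (hp : 1 ≤ p) :
    circleLpNorm p (fun z => P.derivative.eval z) ≤ n * circleLpNorm p (fun z => P.eval z) := by
  obtain rfl | hn := eq_or_ne n 0
  · rw [derivative_of_natDegree_zero (Nat.le_zero.mp hP)]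
    simp [circleLpNorm_zero (by linarith : p ≠ 0)]
  set ζ := exp (2 * π * I / ↑(4 * n))
  have hζ : IsPrimitiveRoot ζ (4 * n) := isPrimitiveRoot_exp _ (by omega)
  have hζ1 : ‖ζ‖ = 1 := hζ.norm'_eq_one (by omega)
  have hω : ∀ k, ‖ζ ^ (2 * k + 1)‖ = 1 := fun k => by rw [norm_pow, hζ1, one_pow]
  have h4n : (4 * n : ℂ) ≠ 0 := by exact_mod_cast (by omega : 4 * n ≠ 0)
  calc circleLpNorm p (fun z => P.derivative.eval z)
      = circleLpNorm p (fun z => ∑ k ∈ range (2 * n),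
          ((4 * n : ℂ)⁻¹ * rieszWeight ζ n k) * P.eval (ζ ^ (2 * k + 1) * z)) := by
        refine circleLpNorm_congr_norm fun z hz => ?_
        simp_rw [mul_assoc, ← mul_sum, riesz_interpolation hζ hn hP z, inv_mul_cancel_left₀ h4n,
          norm_mul, hz, one_mul]
    _ ≤ ∑ k ∈ range (2 * n), circleLpNorm p
          (fun z => ((4 * n : ℂ)⁻¹ * rieszWeight ζ n k) * P.eval (ζ ^ (2 * k + 1) * z)) :=
        circleLpNorm_sum_le _ (fun k _ => by fun_prop) hp
    _ = ∑ k ∈ range (2 * n),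
          ‖(4 * n : ℂ)⁻¹ * rieszWeight ζ n k‖ * circleLpNorm p (fun z => P.eval z) := by
        refine sum_congr rfl fun k _ => ?_
        rw [circleLpNorm_const_mul (by linarith),
          circleLpNorm_comp_mul_left (hω k) (fun z => P.eval z)]
    _ = n * circleLpNorm p (fun z => P.eval z) := by
        simp_rw [← sum_mul, norm_mul, ← mul_sum, sum_norm_rieszWeight hζ hn, norm_inv, norm_mul]
        have hn0 : (n : ℝ) ≠ 0 := by exact_mod_cast hn
        rw [Complex.norm_natCast, Complex.norm_ofNat]
        field_simp

end Bernstein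

lemma coeff_X_mul_derivative {R : Type*} [Semiring R] (f : R[X]) (m : ℕ) :
    (X * derivative f).coeff m = m * f.coeff m := by
  cases m with
  | zero => simp
  | succ m => rw [coeff_X_mul, coeff_derivative, ← Nat.cast_succ, Nat.cast_comm]

section Reflect

variable {R : Type*} [CommRing R] {N : ℕ} {f : R[X]}

lemma natDegree_C_mul_sub_X_mul_derivative_le (hf : f.natDegree ≤ N) :
    (C (N : R) * f - X * derivative f).natDegree ≤ N := by
  refine natDegree_le_iff_coeff_eq_zero.mpr fun m hm => ?_
  rw [coeff_sub, coeff_C_mul, coeff_X_mul_derivative, coeff_eq_zero_of_natDegree_lt (by omega)]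
  ring

lemma X_mul_derivative_reflect (hf : f.natDegree ≤ N) :
    X * derivative (reflect N f) = reflect N (C (N : R) * f - X * derivative f) := by
  ext m
  rw [coeff_X_mul_derivative, coeff_reflect, coeff_reflect, coeff_sub, coeff_C_mul,
    coeff_X_mul_derivative]
  by_cases hm : m ≤ N
  · rw [revAt_le hm, Nat.cast_sub hm]; ring
  · rw [revAt_eq_self_of_lt (by omega), coeff_eq_zero_of_natDegree_lt (by omega)]; ring

end Reflect

section ConjugateReciprocal

open Complex ComplexConjugate

variable {N : ℕ} {f : ℂ[X]} {z : ℂ}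

lemma norm_eval_reflect_map_conj (hf : f.natDegree ≤ N) (hz : ‖z‖ = 1) :
    ‖((f.map (starRingEnd ℂ)).reflect N).eval z‖ = ‖f.eval z‖ := by
  have hunit : z * conj z = 1 := by rw [mul_conj, normSq_eq_norm_sq, hz]; norm_num
  let _ : Invertible (conj z) := ⟨z, hunit, by rw [mul_comm, hunit]⟩
  have h : eval₂ (starRingEnd ℂ) z (reflect N f) * conj z ^ N = conj (f.eval z) := by
    rw [← eval₂_at_apply]; exact eval₂_reflect_mul_pow (starRingEnd ℂ) (conj z) N f hf
  rw [← eval_map, ← reflect_map] at h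
  simpa [hz] using congrArg norm h

lemma norm_derivative_eval_reflect_map_conj (hf : f.natDegree ≤ N) (hz : ‖z‖ = 1) :
    ‖((f.map (starRingEnd ℂ)).reflect N).derivative.eval z‖ =
      ‖N * f.eval z - z * f.derivative.eval z‖ := by
  have hX : X * derivative ((f.map (starRingEnd ℂ)).reflect N) =
      reflect N ((C (N : ℂ) * f - X * derivative f).map (starRingEnd ℂ)) := by
    rw [X_mul_derivative_reflect (natDegree_map_le.trans hf)]
    simp [Polynomial.map_sub, Polynomial.map_mul, derivative_map]
  calc ‖((f.map (starRingEnd ℂ)).reflect N).derivative.eval z‖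
      = ‖(X * derivative ((f.map (starRingEnd ℂ)).reflect N)).eval z‖ := by
        rw [eval_mul, eval_X, norm_mul, hz, one_mul]
    _ = ‖N * f.eval z - z * f.derivative.eval z‖ := by
        rw [hX, norm_eval_reflect_map_conj (natDegree_C_mul_sub_X_mul_derivative_le hf) hz]
        simp

theorem circleLpNorm_sub_X_mul_derivative_le {p : ℝ} {n : ℕ} {P : ℂ[X]} (hP : P.natDegree ≤ n)
    (hp : 1 ≤ p) :
    circleLpNorm p (fun z => n * P.eval z - z * P.derivative.eval z) ≤
      n * circleLpNorm p (fun z => P.eval z) := by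
  have hQ : ((P.map (starRingEnd ℂ)).reflect n).natDegree ≤ n :=
    natDegree_reflect_le.trans (max_le le_rfl (natDegree_map_le.trans hP))
  calc circleLpNorm p (fun z => n * P.eval z - z * P.derivative.eval z)
      = circleLpNorm p (fun z => ((P.map (starRingEnd ℂ)).reflect n).derivative.eval z) :=
        circleLpNorm_congr_norm fun z hz => (norm_derivative_eval_reflect_map_conj hP hz).symm
    _ ≤ n * circleLpNorm p (fun z => ((P.map (starRingEnd ℂ)).reflect n).eval z) :=
        circleLpNorm_derivative_le hQ hp
    _ = n * circleLpNorm p (fun z => P.eval z) := by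
        rw [circleLpNorm_congr_norm fun z hz => norm_eval_reflect_map_conj hP hz]

end ConjugateReciprocal

theorem aziz_rather_Lp_polar_general (n : ℕ) (P : Polynomial ℂ) (hP : P.natDegree = n)
    (α : ℂ) (p : ℝ) (hp : 1 ≤ p) :
    (∫ θ in (0:ℝ)..(2 * π),
        ‖((n : ℂ) * P.eval (Complex.exp (θ * Complex.I)) +
          (α - Complex.exp (θ * Complex.I)) *
            P.derivative.eval (Complex.exp (θ * Complex.I)))‖ ^ p) ^ (1 / p) ≤
      (n : ℝ) * (‖α‖ + 1) *
        (∫ θ in (0:ℝ)..(2 * π),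
          ‖P.eval (Complex.exp (θ * Complex.I))‖ ^ p) ^ (1 / p) := by
  change circleLpNorm p (fun z => n * P.eval z + (α - z) * P.derivative.eval z) ≤
    n * (‖α‖ + 1) * circleLpNorm p (fun z => P.eval z)
  calc circleLpNorm p (fun z => n * P.eval z + (α - z) * P.derivative.eval z)
      = circleLpNorm p
          (fun z => α * P.derivative.eval z + (n * P.eval z - z * P.derivative.eval z)) := by
        congr 1; ext z; ring
    _ ≤ ‖α‖ * circleLpNorm p (fun z => P.derivative.eval z) +
          circleLpNorm p (fun z => n * P.eval z - z * P.derivative.eval z) := by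
        rw [← circleLpNorm_const_mul (by linarith)]
        exact circleLpNorm_add_le hp (by fun_prop) (by fun_prop)
    _ ≤ ‖α‖ * (n * circleLpNorm p (fun z => P.eval z)) +
          n * circleLpNorm p (fun z => P.eval z) := by
        gcongr
        · exact circleLpNorm_derivative_le hP.le hp
        · exact circleLpNorm_sub_X_mul_derivative_le hP.le hp
    _ = n * (‖α‖ + 1) * circleLpNorm p (fun z => P.eval z) := by ring

theorem aziz_rather_Lp_polar (n : ℕ) (P : Polynomial ℂ) (hP : P.natDegree = n)
    (α : ℂ) (hα : 1 ≤ ‖α‖) (p : ℝ) (hp : 1 ≤ p) :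
    (∫ θ in (0:ℝ)..(2 * π),
        ‖((n : ℂ) * P.eval (Complex.exp (θ * Complex.I)) +
          (α - Complex.exp (θ * Complex.I)) *
            P.derivative.eval (Complex.exp (θ * Complex.I)))‖ ^ p) ^ (1 / p) ≤
      (n : ℝ) * (‖α‖ + 1) *
        (∫ θ in (0:ℝ)..(2 * π),
          ‖P.eval (Complex.exp (θ * Complex.I))‖ ^ p) ^ (1 / p) :=
  aziz_rather_Lp_polar_general n P hP α p hp
end

section
/- If P is a complex polynomial of degree n with no zeros in the open unit disk |z| < 1, then for every p ≥ 1, (∫₀^{2π} |P'(e^{iθ})|^p dθ)^{1/p} ≤ n·C_p·(∫₀^{2π} |P(e^{iθ})|^p dθ)^{1/p}, where C_p = ((1/2π)∫₀^{2π} |1+e^{iφ}|^p dφ)^{-1/p}. -/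
/-!
On the unit circle, a polynomial `P` of degree `n` with no zeros in the open disk satisfies
`‖P'(u)‖ ≤ ‖n P(u) - u P'(u)‖`: each root `a` contributes `Re (u / (u - a)) ≤ 1/2` to
`Re (u P'(u) / P(u))`. The mean over `α` of `‖c₁ + e^{iα} c₂‖ ^ p` depends only on `‖c₁‖, ‖c₂‖` and
increases with `‖c₁‖`, so for each `θ` it dominates `‖P'(e^{iθ})‖ ^ p` times the mean of
`‖1 + e^{iα}‖ ^ p` when `c₁ = n P - u P'`, `c₂ = u P'`. For fixed `α` the polynomial
`n P + (e^{iα} - 1) z P'` multiplies the `k`-th coefficient of `P` by `(n - k) + k e^{iα}`, which is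
`n` times the `k`-th moment of the Fejér kernel placed on the `n`-th roots of `e^{iα}`; it is
therefore `n` times a convex combination of rotations of `P`, and Jensen's inequality bounds its
`L^p` norm by `n` times that of `P`. Fubini's theorem combines the two estimates.
-/

open Polynomial Real MeasureTheory Finset Complex ComplexConjugate

namespace DeBruijn

noncomputable def cis (t : ℝ) : ℂ := exp (t * I)

@[simp]
lemma norm_cis (t : ℝ) : ‖cis t‖ = 1 := norm_exp_ofReal_mul_I t

@[simp]
lemma cis_zero : cis 0 = 1 := by simp [cis]

lemma cis_add (s t : ℝ) : cis (s + t) = cis s * cis t := by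
  simp only [cis, ofReal_add, add_mul, Complex.exp_add]

lemma cis_natCast_mul (k : ℕ) (t : ℝ) : cis (k * t) = cis t ^ k := by
  rw [cis, cis, ← Complex.exp_nat_mul]
  push_cast
  ring_nf

lemma conj_cis (t : ℝ) : conj (cis t) = cis (-t) := by
  rw [cis, cis, ← exp_conj]
  simp

lemma cis_eq_one_iff (t : ℝ) : cis t = 1 ↔ ∃ m : ℤ, t = m * (2 * π) := by
  rw [cis, Complex.exp_eq_one_iff]
  refine exists_congr fun m => ?_
  rw [show (m : ℂ) * (2 * π * I) = ((m * (2 * π) : ℝ) : ℂ) * I by push_cast; ring,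
    mul_left_inj' I_ne_zero, ofReal_inj]

lemma cis_periodic : Function.Periodic cis (2 * π) := fun t => by
  rw [cis_add, (cis_eq_one_iff (2 * π)).2 ⟨1, by simp⟩, mul_one]

@[fun_prop]
lemma continuous_cis : Continuous cis := by
  unfold cis
  fun_prop

lemma integral_comp_cis_add {E : Type*} [NormedAddCommGroup E] [NormedSpace ℝ E]
    (f : ℂ → E) (c : ℝ) :
    ∫ θ in (0:ℝ)..2 * π, f (cis (θ + c)) = ∫ θ in (0:ℝ)..2 * π, f (cis θ) := by
  rw [intervalIntegral.integral_comp_add_right (fun θ => f (cis θ)), zero_add, add_comm (2 * π)]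
  simpa using (cis_periodic.comp f).intervalIntegral_add_eq c 0

lemma two_mul_re_mul_conj_sub_le {u a : ℂ} (hu : ‖u‖ = 1) (ha : 1 ≤ ‖a‖) :
    2 * (u * conj (u - a)).re ≤ normSq (u - a) := by
  have h := normSq_sub u (u - a)
  rw [sub_sub_cancel, normSq_eq_norm_sq u, normSq_eq_norm_sq a, hu] at h
  nlinarith

lemma two_mul_re_mul_derivative_mul_conj_le_of_roots (s : Multiset ℂ) (hs : ∀ a ∈ s, 1 ≤ ‖a‖)
    {u : ℂ} (hu : ‖u‖ = 1) :
    2 * (u * (s.map fun a => X - C a).prod.derivative.eval u *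
        conj ((s.map fun a => X - C a).prod.eval u)).re ≤
      s.card * normSq ((s.map fun a => X - C a).prod.eval u) := by
  induction s using Multiset.induction_on with
  | empty => simp
  | cons a t ih =>
    simp only [Multiset.map_cons, Multiset.prod_cons, derivative_mul, derivative_sub,
      derivative_X, derivative_C, sub_zero, one_mul, eval_add, eval_mul, eval_sub, eval_X,
      eval_C, normSq_mul, Multiset.card_cons]
    set q := (t.map fun a => X - C a).prod
    have hc := two_mul_re_mul_conj_sub_le hu (hs a (Multiset.mem_cons_self a t))
    have ih := ih fun w hw => hs w (Multiset.mem_cons_of_mem hw)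
    have hA := normSq_nonneg (q.eval u)
    have hc0 := normSq_nonneg (u - a)
    have expand : u * (q.eval u + (u - a) * q.derivative.eval u) * conj ((u - a) * q.eval u) =
        normSq (q.eval u) * (u * conj (u - a)) +
          normSq (u - a) * (u * q.derivative.eval u * conj (q.eval u)) := by
      rw [map_mul, ← mul_conj, ← mul_conj]
      ring
    rw [expand, add_re, re_ofReal_mul, re_ofReal_mul]
    push_cast
    nlinarith

lemma two_mul_re_mul_derivative_mul_conj_le {P : ℂ[X]} (hP : ∀ z : ℂ, ‖z‖ < 1 → P.eval z ≠ 0)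
    {u : ℂ} (hu : ‖u‖ = 1) :
    2 * (u * P.derivative.eval u * conj (P.eval u)).re ≤ P.natDegree * normSq (P.eval u) := by
  have hP0 : P ≠ 0 := fun h => hP 0 (by simp) (by simp [h])
  have hroots : ∀ a ∈ P.roots, 1 ≤ ‖a‖ := fun a ha =>
    not_lt.1 fun h => hP a h ((mem_roots hP0).1 ha)
  have hsplit : P.Splits := IsAlgClosed.splits P
  set q := (P.roots.map fun a => X - C a).prod
  set L := P.leadingCoeff
  have hfactor : P = C L * q := hsplit.eq_prod_roots
  have hq := two_mul_re_mul_derivative_mul_conj_le_of_roots P.roots hroots hu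
  rw [← splits_iff_card_roots.1 hsplit]
  have expand : u * P.derivative.eval u * conj (P.eval u) =
      normSq L * (u * q.derivative.eval u * conj (q.eval u)) := by
    rw [hfactor, derivative_C_mul, eval_mul, eval_mul, eval_C, map_mul, ← mul_conj]
    ring
  have heval : P.eval u = L * q.eval u := by rw [hfactor, eval_mul, eval_C]
  rw [expand, re_ofReal_mul, heval, normSq_mul]
  nlinarith [normSq_nonneg L]

lemma norm_le_norm_mul_sub_of_two_mul_re_le {A B : ℂ} {r : ℝ} (hr : 0 ≤ r)
    (h : 2 * (B * conj A).re ≤ r * normSq A) : ‖B‖ ≤ ‖r * A - B‖ := by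
  rw [← sq_le_sq₀ (norm_nonneg _) (norm_nonneg _), Complex.sq_norm, Complex.sq_norm, normSq_sub,
    normSq_mul, normSq_ofReal, mul_assoc (r : ℂ), re_ofReal_mul, ← conj_re, map_mul, conj_conj,
    mul_comm (conj A)]
  nlinarith

theorem norm_derivative_eval_le {P : ℂ[X]} (hP : ∀ z : ℂ, ‖z‖ < 1 → P.eval z ≠ 0) {u : ℂ}
    (hu : ‖u‖ = 1) :
    ‖P.derivative.eval u‖ ≤ ‖P.natDegree * P.eval u - u * P.derivative.eval u‖ := by
  have h := norm_le_norm_mul_sub_of_two_mul_re_le (Nat.cast_nonneg P.natDegree)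
    (two_mul_re_mul_derivative_mul_conj_le hP hu)
  rwa [ofReal_natCast, norm_mul u, hu, one_mul] at h

lemma norm_ofReal_add_mul_le {r s : ℝ} (hr : 0 ≤ r) (hrs : r ≤ s) {z : ℂ} (hz : ‖z‖ ≤ 1) :
    ‖(r : ℂ) + z * r‖ ≤ ‖(s : ℂ) + z * r‖ := by
  have hre : -1 ≤ z.re := by linarith [abs_le.1 ((abs_re_le_norm z).trans hz)]
  rw [← sq_le_sq₀ (norm_nonneg _) (norm_nonneg _), Complex.sq_norm, Complex.sq_norm,
    normSq_apply, normSq_apply]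
  simp only [add_re, add_im, mul_re, mul_im, ofReal_re, ofReal_im]
  nlinarith [mul_nonneg (sub_nonneg.2 hrs) (mul_nonneg hr (neg_le_iff_add_nonneg.1 hre))]

lemma exists_norm_add_cis_mul_eq (c₁ c₂ : ℂ) :
    ∃ δ : ℝ, ∀ α : ℝ, ‖c₁ + cis α * c₂‖ = ‖(‖c₁‖ : ℂ) + cis (α + δ) * ‖c₂‖‖ := by
  refine ⟨c₂.arg - c₁.arg, fun α => ?_⟩
  have polar (c : ℂ) : c = ‖c‖ * cis c.arg := (norm_mul_exp_arg_mul_I c).symm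
  have hcis : cis c₁.arg * cis (c₂.arg - c₁.arg) = cis c₂.arg := by
    rw [← cis_add, add_sub_cancel]
  have h : c₁ + cis α * c₂ = cis c₁.arg * (‖c₁‖ + cis (α + (c₂.arg - c₁.arg)) * ‖c₂‖) := by
    rw [cis_add]
    linear_combination polar c₁ + cis α * polar c₂ - cis α * ‖c₂‖ * hcis
  rw [h, norm_mul, norm_cis, one_mul]

lemma integral_norm_add_cis_mul_rpow (c₁ c₂ : ℂ) (p : ℝ) :
    ∫ α in (0:ℝ)..2 * π, ‖c₁ + cis α * c₂‖ ^ p =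
      ∫ α in (0:ℝ)..2 * π, ‖(‖c₁‖ : ℂ) + cis α * ‖c₂‖‖ ^ p := by
  obtain ⟨δ, hδ⟩ := exists_norm_add_cis_mul_eq c₁ c₂
  simp_rw [hδ]
  exact integral_comp_cis_add (fun z => ‖(‖c₁‖ : ℂ) + z * ‖c₂‖‖ ^ p) δ

theorem integral_norm_one_add_cis_rpow_mul_le {c₁ c₂ : ℂ} (h : ‖c₂‖ ≤ ‖c₁‖) {p : ℝ}
    (hp : 0 ≤ p) :
    (∫ α in (0:ℝ)..2 * π, ‖1 + cis α‖ ^ p) * ‖c₂‖ ^ p ≤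
      ∫ α in (0:ℝ)..2 * π, ‖c₁ + cis α * c₂‖ ^ p := by
  rw [integral_norm_add_cis_mul_rpow, ← intervalIntegral.integral_mul_const]
  refine intervalIntegral.integral_mono_on (by positivity)
    (Continuous.intervalIntegrable (by fun_prop (disch := assumption)) _ _)
    (Continuous.intervalIntegrable (by fun_prop (disch := assumption)) _ _) fun α _ => ?_
  have hone : ‖1 + cis α‖ * ‖c₂‖ = ‖(‖c₂‖ : ℂ) + cis α * ‖c₂‖‖ := by
    rw [show (‖c₂‖ : ℂ) + cis α * ‖c₂‖ = (1 + cis α) * ‖c₂‖ by ring, norm_mul, norm_real,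
      norm_norm]
  rw [← mul_rpow (norm_nonneg _) (norm_nonneg _), hone]
  exact rpow_le_rpow (norm_nonneg _)
    (norm_ofReal_add_mul_le (norm_nonneg _) h (norm_cis α).le) hp

noncomputable def fejerNode (n : ℕ) (α : ℝ) (j : ℕ) : ℝ := (α + 2 * π * j) / n

noncomputable def dirichletSum (n : ℕ) (x : ℝ) : ℂ := ∑ m ∈ range n, cis (m * x)

noncomputable def fejerWeight (n : ℕ) (α : ℝ) (j : ℕ) : ℝ :=
  normSq (dirichletSum n (fejerNode n α j)) / n ^ 2

lemma fejerWeight_nonneg (n : ℕ) (α : ℝ) (j : ℕ) : 0 ≤ fejerWeight n α j :=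
  div_nonneg (normSq_nonneg _) (sq_nonneg _)

lemma sum_cis_intCast_mul_fejerNode {n : ℕ} (hn : 0 < n) (α : ℝ) (d : ℤ) :
    ∑ j ∈ range n, cis (d * fejerNode n α j) =
      if (n : ℤ) ∣ d then n * cis (d * α / n) else 0 := by
  have hn' : (n : ℝ) ≠ 0 := by positivity
  set r := cis (2 * π * d / n)
  have hterm (j : ℕ) : cis (d * fejerNode n α j) = cis (d * α / n) * r ^ j := by
    rw [← cis_natCast_mul, ← cis_add, fejerNode]
    congr 1
    ring
  have hr : r = 1 ↔ (n : ℤ) ∣ d := by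
    refine (cis_eq_one_iff _).trans (exists_congr fun m => ?_)
    rw [← @Int.cast_inj ℝ, Int.cast_mul, Int.cast_natCast]
    constructor <;> intro h <;> field_simp at h ⊢ <;> linarith [pi_pos]
  have hrn : r ^ n = 1 := by
    rw [← cis_natCast_mul, cis_eq_one_iff]
    exact ⟨d, by field_simp⟩
  rw [sum_congr rfl fun j _ => hterm j, ← mul_sum]
  split_ifs with hd
  · simp [hr.2 hd, mul_comm]
  · rw [geom_sum_eq (mt hr.1 hd), hrn, sub_self, zero_div, mul_zero]

lemma sum_range_ite_dvd_sub_add {M : Type*} [AddCommMonoid M] (g : ℤ → M) {n k l : ℕ}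
    (hk : k ≤ n) (hl : l < n) :
    ∑ m ∈ range n, (if (n : ℤ) ∣ (m - l + k : ℤ) then g (m - l + k) else 0) =
      if k ≤ l then g 0 else g n := by
  -- `m - l + k` lies in `(-n, 2n)`, so the only multiples of `n` it can equal are `0` and `n`.
  have hdvd : ∀ m < n,
      (n : ℤ) ∣ (m - l + k : ℤ) ↔ (m - l + k : ℤ) = if k ≤ l then (0 : ℤ) else n := by
    intro m hm
    constructor
    · intro h
      rcases lt_or_ge ((m : ℤ) - l + k) n with hlt | hge
      · have := Int.eq_zero_of_abs_lt_dvd h (abs_lt.2 ⟨by omega, hlt⟩)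
        split_ifs <;> omega
      · have := Int.eq_zero_of_abs_lt_dvd (dvd_sub h dvd_rfl) (abs_lt.2 ⟨by omega, by omega⟩)
        split_ifs <;> omega
    · intro h
      rw [h]
      split_ifs
      exacts [dvd_zero _, dvd_rfl]
  obtain ⟨m₀, hm₀, hx⟩ : ∃ m₀ < n, (m₀ - l + k : ℤ) = if k ≤ l then (0 : ℤ) else n := by
    split_ifs
    exacts [⟨l - k, by omega, by omega⟩, ⟨l + n - k, by omega, by omega⟩]
  rw [sum_eq_single_of_mem m₀ (mem_range.2 hm₀), if_pos ((hdvd m₀ hm₀).2 hx), hx, apply_ite g]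
  intro m hm hne
  rw [if_neg fun h => hne ?_]
  have := (hdvd m (mem_range.1 hm)).1 h
  omega

lemma sum_range_ite_le {M : Type*} [AddCommMonoid M] {n k : ℕ} (hk : k ≤ n) (a b : M) :
    ∑ l ∈ range n, (if k ≤ l then a else b) = (n - k) • a + k • b := by
  rw [← sum_range_add_sum_Ico _ hk, sum_congr rfl fun l hl => if_neg (by simp at hl; omega),
    sum_congr rfl fun l hl => if_pos (mem_Ico.1 hl).1]
  simp [add_comm]

lemma normSq_dirichletSum_mul_cis (n k : ℕ) (x : ℝ) :
    (normSq (dirichletSum n x) : ℂ) * cis (k * x) =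
      ∑ l ∈ range n, ∑ m ∈ range n, cis (((m - l + k : ℤ) : ℝ) * x) := by
  rw [← mul_conj, dirichletSum, map_sum, sum_mul_sum, sum_comm, sum_mul]
  refine sum_congr rfl fun l _ => ?_
  rw [sum_mul]
  refine sum_congr rfl fun m _ => ?_
  rw [conj_cis, ← cis_add, ← cis_add]
  congr 1
  push_cast
  ring

theorem natCast_mul_sum_fejerWeight_mul_cis {n k : ℕ} (hn : 0 < n) (hk : k ≤ n) (α : ℝ) :
    n * ∑ j ∈ range n, (fejerWeight n α j : ℂ) * cis (k * fejerNode n α j) =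
      (n - k) + k * cis α := by
  have hn' : (n : ℂ) ≠ 0 := by exact_mod_cast hn.ne'
  refine mul_left_cancel₀ hn' ?_
  calc (n : ℂ) * (n * ∑ j ∈ range n, (fejerWeight n α j : ℂ) * cis (k * fejerNode n α j))
      = ∑ j ∈ range n, (normSq (dirichletSum n (fejerNode n α j)) : ℂ) *
          cis (k * fejerNode n α j) := by
        rw [← mul_assoc, mul_sum]
        refine sum_congr rfl fun j _ => ?_
        rw [fejerWeight, ofReal_div]
        push_cast
        field_simp
    _ = ∑ l ∈ range n, ∑ m ∈ range n, ∑ j ∈ range n,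
          cis (((m - l + k : ℤ) : ℝ) * fejerNode n α j) := by
        simp_rw [normSq_dirichletSum_mul_cis]
        rw [sum_comm]
        exact sum_congr rfl fun l _ => sum_comm
    _ = ∑ l ∈ range n, if k ≤ l then (n : ℂ) else n * cis α := by
        refine sum_congr rfl fun l hl => ?_
        simp_rw [sum_cis_intCast_mul_fejerNode hn]
        rw [sum_range_ite_dvd_sub_add (fun d : ℤ => (n : ℂ) * cis (d * α / n)) hk
          (mem_range.1 hl)]
        have hnR : (n : ℝ) ≠ 0 := by positivity
        split_ifs <;> simp [mul_div_cancel_left₀ α hnR]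
    _ = n * ((n - k) + k * cis α) := by
        rw [sum_range_ite_le hk, nsmul_eq_mul, nsmul_eq_mul, Nat.cast_sub hk]
        ring

lemma sum_fejerWeight {n : ℕ} (hn : 0 < n) (α : ℝ) : ∑ j ∈ range n, fejerWeight n α j = 1 := by
  have h := natCast_mul_sum_fejerWeight_mul_cis hn (Nat.zero_le n) α
  simp only [Nat.cast_zero, zero_mul, cis_zero, mul_one, sub_zero, add_zero] at h
  have hn' : (n : ℂ) ≠ 0 := by exact_mod_cast hn.ne'
  exact_mod_cast mul_left_cancel₀ hn' (h.trans (mul_one _).symm)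

lemma mul_eval_derivative_eq_sum_range {R : Type*} [CommSemiring R] {P : R[X]} {N : ℕ}
    (hP : P.natDegree < N) (u : R) :
    u * P.derivative.eval u = ∑ k ∈ range N, P.coeff k * k * u ^ k := by
  rw [derivative_eval, sum_over_range' _ (fun k => by simp) N hP, mul_sum]
  refine sum_congr rfl fun k _ => ?_
  rcases k with _ | k
  · simp
  · rw [Nat.add_sub_cancel, pow_succ]
    ring

theorem natCast_mul_sum_fejerWeight_mul_eval {n : ℕ} (hn : 0 < n) {P : ℂ[X]}
    (hP : P.natDegree ≤ n) (θ α : ℝ) :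
    n * ∑ j ∈ range n, (fejerWeight n α j : ℂ) * P.eval (cis (θ + fejerNode n α j)) =
      (n * P.eval (cis θ) - cis θ * P.derivative.eval (cis θ)) +
        cis α * (cis θ * P.derivative.eval (cis θ)) := by
  have hN : P.natDegree < n + 1 := by omega
  simp_rw [eval_eq_sum_range' hN, mul_eval_derivative_eq_sum_range hN, cis_add, mul_pow]
  calc (n : ℂ) * ∑ j ∈ range n, (fejerWeight n α j : ℂ) *
        ∑ k ∈ range (n + 1), P.coeff k * (cis θ ^ k * cis (fejerNode n α j) ^ k)
      = ∑ k ∈ range (n + 1), P.coeff k * cis θ ^ k *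
          (n * ∑ j ∈ range n, (fejerWeight n α j : ℂ) * cis (k * fejerNode n α j)) := by
        simp only [mul_sum, cis_natCast_mul]
        rw [sum_comm]
        exact sum_congr rfl fun k _ => sum_congr rfl fun j _ => by ring
    _ = ∑ k ∈ range (n + 1), P.coeff k * cis θ ^ k * ((n - k) + k * cis α) :=
        sum_congr rfl fun k hk =>
          by rw [natCast_mul_sum_fejerWeight_mul_cis hn (Nat.lt_succ_iff.1 (mem_range.1 hk))]
    _ = _ := by
        rw [mul_sum, mul_sum, ← sum_sub_distrib, ← sum_add_distrib]
        exact sum_congr rfl fun k _ => by ring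

lemma norm_sum_smul_rpow_le {ι E : Type*} [SeminormedAddCommGroup E] [NormedSpace ℝ E]
    (s : Finset ι) {w : ι → ℝ} (hw : ∀ i ∈ s, 0 ≤ w i) (hw₁ : ∑ i ∈ s, w i = 1) (z : ι → E)
    {p : ℝ} (hp : 1 ≤ p) :
    ‖∑ i ∈ s, w i • z i‖ ^ p ≤ ∑ i ∈ s, w i * ‖z i‖ ^ p := by
  have hnorm : ‖∑ i ∈ s, w i • z i‖ ≤ ∑ i ∈ s, w i * ‖z i‖ :=
    (norm_sum_le _ _).trans_eq <| sum_congr rfl fun i hi => by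
      rw [norm_smul, norm_of_nonneg (hw i hi)]
  exact (rpow_le_rpow (norm_nonneg _) hnorm (by linarith)).trans
    (rpow_arith_mean_le_arith_mean_rpow s w _ hw hw₁ (fun i _ => norm_nonneg _) hp)

theorem integral_norm_rpow_le {n : ℕ} {P : ℂ[X]} (hP : P.natDegree ≤ n) {p : ℝ} (hp : 1 ≤ p)
    (α : ℝ) :
    ∫ θ in (0:ℝ)..2 * π, ‖(n * P.eval (cis θ) - cis θ * P.derivative.eval (cis θ)) +
        cis α * (cis θ * P.derivative.eval (cis θ))‖ ^ p ≤
      n ^ p * ∫ θ in (0:ℝ)..2 * π, ‖P.eval (cis θ)‖ ^ p := by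
  rcases n.eq_zero_or_pos with rfl | hn
  · rw [derivative_of_natDegree_zero (Nat.le_zero.1 hP)]
    simp [zero_rpow (by linarith : p ≠ 0)]
  have hpoint (θ : ℝ) : ‖(n * P.eval (cis θ) - cis θ * P.derivative.eval (cis θ)) +
      cis α * (cis θ * P.derivative.eval (cis θ))‖ ^ p ≤
      n ^ p * ∑ j ∈ range n, fejerWeight n α j * ‖P.eval (cis (θ + fejerNode n α j))‖ ^ p := by
    rw [← natCast_mul_sum_fejerWeight_mul_eval hn hP, norm_mul, Complex.norm_natCast,
      mul_rpow (Nat.cast_nonneg n) (norm_nonneg _)]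
    simp_rw [← real_smul]
    exact mul_le_mul_of_nonneg_left (norm_sum_smul_rpow_le _
      (fun j _ => fejerWeight_nonneg n α j) (sum_fejerWeight hn α) _ hp) (by positivity)
  calc _ ≤ ∫ θ in (0:ℝ)..2 * π, (n : ℝ) ^ p *
        ∑ j ∈ range n, fejerWeight n α j * ‖P.eval (cis (θ + fejerNode n α j))‖ ^ p :=
        intervalIntegral.integral_mono_on (by positivity)
          (Continuous.intervalIntegrable (by fun_prop (disch := linarith)) _ _)
          (Continuous.intervalIntegrable (by fun_prop (disch := linarith)) _ _)
          fun θ _ => hpoint θ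
    _ = n ^ p * ∫ θ in (0:ℝ)..2 * π, ‖P.eval (cis θ)‖ ^ p := by
        rw [intervalIntegral.integral_const_mul, intervalIntegral.integral_finsetSum
          fun j _ => Continuous.intervalIntegrable (by fun_prop (disch := linarith)) _ _]
        simp_rw [intervalIntegral.integral_const_mul,
          integral_comp_cis_add (fun z => ‖P.eval z‖ ^ p)]
        rw [← sum_mul, sum_fejerWeight hn, one_mul]

lemma intervalIntegral_integral_swap_of_continuous {f : ℝ → ℝ → ℝ}
    (hf : Continuous (Function.uncurry f)) {a b c d : ℝ} (hab : a ≤ b) (hcd : c ≤ d) :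
    ∫ x in a..b, ∫ y in c..d, f x y = ∫ y in c..d, ∫ x in a..b, f x y := by
  simp only [intervalIntegral.integral_of_le hab, intervalIntegral.integral_of_le hcd]
  refine integral_integral_swap ?_
  rw [Measure.prod_restrict, ← Measure.volume_eq_prod]
  exact (hf.continuousOn.integrableOn_compact (isCompact_Icc.prod isCompact_Icc)).mono_set
    (Set.prod_mono Set.Ioc_subset_Icc_self Set.Ioc_subset_Icc_self)

theorem integral_derivative_rpow_mul_le {P : ℂ[X]} (hP : ∀ z : ℂ, ‖z‖ < 1 → P.eval z ≠ 0)
    {p : ℝ} (hp : 1 ≤ p) :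
    (∫ θ in (0:ℝ)..2 * π, ‖P.derivative.eval (cis θ)‖ ^ p) *
        ∫ α in (0:ℝ)..2 * π, ‖1 + cis α‖ ^ p ≤
      2 * π * (P.natDegree ^ p * ∫ θ in (0:ℝ)..2 * π, ‖P.eval (cis θ)‖ ^ p) := by
  let H : ℝ → ℝ → ℝ := fun θ α =>
    ‖(P.natDegree * P.eval (cis θ) - cis θ * P.derivative.eval (cis θ)) +
      cis α * (cis θ * P.derivative.eval (cis θ))‖ ^ p
  have hH : Continuous (Function.uncurry H) := by fun_prop (disch := linarith)
  have hH' : Continuous (Function.uncurry fun α θ => H θ α) := by fun_prop (disch := linarith)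
  have h2π : (0:ℝ) ≤ 2 * π := by positivity
  calc _ = ∫ θ in (0:ℝ)..2 * π,
        (∫ α in (0:ℝ)..2 * π, ‖1 + cis α‖ ^ p) * ‖P.derivative.eval (cis θ)‖ ^ p := by
        rw [intervalIntegral.integral_const_mul, mul_comm]
    _ ≤ ∫ θ in (0:ℝ)..2 * π, ∫ α in (0:ℝ)..2 * π, H θ α := by
        refine intervalIntegral.integral_mono_on h2π
          (Continuous.intervalIntegrable (by fun_prop (disch := linarith)) _ _)
          ((intervalIntegral.continuous_parametric_intervalIntegral_of_continuous' hH _ _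
            ).intervalIntegrable _ _) fun θ _ => ?_
        have hnorm : ‖cis θ * P.derivative.eval (cis θ)‖ = ‖P.derivative.eval (cis θ)‖ := by
          rw [norm_mul, norm_cis, one_mul]
        have hle := norm_derivative_eval_le hP (norm_cis θ)
        rw [← hnorm] at hle ⊢
        exact integral_norm_one_add_cis_rpow_mul_le hle (by linarith)
    _ = ∫ α in (0:ℝ)..2 * π, ∫ θ in (0:ℝ)..2 * π, H θ α :=
        intervalIntegral_integral_swap_of_continuous hH h2π h2π
    _ ≤ ∫ α in (0:ℝ)..2 * π,
          (P.natDegree : ℝ) ^ p * ∫ θ in (0:ℝ)..2 * π, ‖P.eval (cis θ)‖ ^ p :=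
        intervalIntegral.integral_mono_on h2π
          ((intervalIntegral.continuous_parametric_intervalIntegral_of_continuous' hH' _ _
            ).intervalIntegrable _ _)
          intervalIntegrable_const fun α _ => integral_norm_rpow_le le_rfl hp α
    _ = _ := by rw [intervalIntegral.integral_const, smul_eq_mul, sub_zero]

lemma integral_norm_one_add_cis_rpow_pos {p : ℝ} (hp : 0 ≤ p) :
    0 < ∫ α in (0:ℝ)..2 * π, ‖1 + cis α‖ ^ p := by
  have hint (a b : ℝ) : IntervalIntegrable (fun α => ‖1 + cis α‖ ^ p) volume a b :=
    Continuous.intervalIntegrable (by fun_prop (disch := assumption)) _ _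
  rw [← intervalIntegral.integral_add_adjacent_intervals (hint 0 π) (hint π (2 * π))]
  refine add_pos_of_pos_of_nonneg (intervalIntegral.intervalIntegral_pos_of_pos_on (hint 0 π)
    (fun α hα => rpow_pos_of_pos (norm_pos_iff.2 fun h => ?_) p) pi_pos)
    (intervalIntegral.integral_nonneg (by linarith [pi_pos]) fun α _ => by positivity)
  have him := congrArg Complex.im h
  simp only [cis, add_im, one_im, exp_ofReal_mul_I_im, zero_im, zero_add] at him
  exact (sin_pos_of_pos_of_lt_pi hα.1 hα.2).ne' him

lemma rpow_one_div_le_of_mul_le {A B Q N p : ℝ} (hA : 0 ≤ A) (hB : 0 ≤ B) (hQ : 0 < Q)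
    (hN : 0 ≤ N) (hp : 0 < p) (h : A * Q ≤ N ^ p * B) :
    A ^ (1 / p) ≤ N * Q ^ (-(1 / p)) * B ^ (1 / p) := by
  calc A ^ (1 / p) ≤ (N ^ p * B / Q) ^ (1 / p) :=
        rpow_le_rpow hA ((le_div_iff₀ hQ).2 h) (by positivity)
    _ = N * Q ^ (-(1 / p)) * B ^ (1 / p) := by
        rw [div_rpow (by positivity) hQ.le, mul_rpow (by positivity) hB, one_div,
          rpow_rpow_inv hN hp.ne', rpow_neg hQ.le]
        ring

end DeBruijn

open DeBruijn in
theorem de_bruijn_inequality (n : ℕ) (P : Polynomial ℂ) (hP : P.natDegree = n)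
    (hzeros : ∀ z : ℂ, ‖z‖ < 1 → P.eval z ≠ 0) (p : ℝ) (hp : 1 ≤ p) :
    (∫ θ in (0:ℝ)..(2 * π),
        ‖P.derivative.eval (Complex.exp (θ * Complex.I))‖ ^ p) ^ (1 / p) ≤
      (n : ℝ) *
        ((1 / (2 * π)) * ∫ φ in (0:ℝ)..(2 * π),
          ‖1 + Complex.exp (φ * Complex.I)‖ ^ p) ^ (-(1 / p)) *
        (∫ θ in (0:ℝ)..(2 * π),
          ‖P.eval (Complex.exp (θ * Complex.I))‖ ^ p) ^ (1 / p) := by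
  subst hP
  have h2π : 0 < 2 * π := by positivity
  have hmain := integral_derivative_rpow_mul_le hzeros hp
  have hpos := integral_norm_one_add_cis_rpow_pos (p := p) (by linarith)
  simp only [cis] at hmain hpos
  refine rpow_one_div_le_of_mul_le
    (intervalIntegral.integral_nonneg h2π.le fun θ _ => by positivity)
    (intervalIntegral.integral_nonneg h2π.le fun θ _ => by positivity) (by positivity)
    (Nat.cast_nonneg _) (by linarith) ?_
  exact Eq.trans_le (by ring) ((div_le_iff₀' h2π).2 hmain)
end

section
/- For every complex number ξ with |ξ| ≥ 1 and every real p ≥ 0, (∫₀^{2π} |ξ + e^{iφ}|^p dφ)^{1/p} ≥ (∫₀^{2π} |1 + e^{iφ}|^p dφ)^{1/p}. -/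
/-!
Multiplying by `e^{-i arg ξ}` turns `|ξ + e^{iφ}|` into `|‖ξ‖ + e^{i(φ - arg ξ)}|`, which dominates
`|1 + e^{i(φ - arg ξ)}|` pointwise because `‖ξ‖ ≥ 1`. Integrating over a full period, the shift
`φ ↦ φ - arg ξ` does not change the integral of `|1 + e^{iφ}|^p`.
-/

open Real

theorem Function.Periodic.intervalIntegral_comp_sub_right {E : Type*} [NormedAddCommGroup E]
    [NormedSpace ℝ E] {f : ℝ → E} {T : ℝ} (hf : Function.Periodic f T) (t c : ℝ) :
    ∫ x in t..t + T, f (x - c) = ∫ x in t..t + T, f x := by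
  rw [intervalIntegral.integral_comp_sub_right, ← sub_add_eq_add_sub, hf.intervalIntegral_add_eq]

namespace Complex

-- `|r + z|² - |1 + z|² = (r - 1) (r + 1 + 2 Re z) ≥ (r - 1)²`
theorem norm_one_add_le_norm_ofReal_add {z : ℂ} (hz : ‖z‖ ≤ 1) {r : ℝ} (hr : 1 ≤ r) :
    ‖1 + z‖ ≤ ‖(r : ℂ) + z‖ := by
  have hre : -1 ≤ z.re := neg_le_of_abs_le ((abs_re_le_norm z).trans hz)
  rw [norm_def, norm_def]
  gcongr
  simp only [normSq_apply, add_re, add_im, one_re, one_im, ofReal_re, ofReal_im]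
  nlinarith

theorem norm_add_exp_ofReal_mul_I (ξ : ℂ) (φ : ℝ) :
    ‖ξ + exp (φ * I)‖ = ‖(‖ξ‖ : ℂ) + exp ((φ - ξ.arg : ℝ) * I)‖ := by
  have hrot : ξ + exp (φ * I) = exp (ξ.arg * I) * ((‖ξ‖ : ℂ) + exp ((φ - ξ.arg : ℝ) * I)) := by
    rw [mul_add, mul_comm (exp _) (‖ξ‖ : ℂ), norm_mul_exp_arg_mul_I, ← exp_add]
    push_cast
    ring_nf
  rw [hrot, norm_mul, norm_exp_ofReal_mul_I, one_mul]

theorem norm_one_add_exp_sub_arg_le {ξ : ℂ} (hξ : 1 ≤ ‖ξ‖) (φ : ℝ) :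
    ‖1 + exp ((φ - ξ.arg : ℝ) * I)‖ ≤ ‖ξ + exp (φ * I)‖ := by
  rw [norm_add_exp_ofReal_mul_I ξ]
  exact norm_one_add_le_norm_ofReal_add (norm_exp_ofReal_mul_I _).le hξ

theorem periodic_norm_one_add_exp_mul_I_rpow (p : ℝ) :
    Function.Periodic (fun φ : ℝ => ‖1 + exp (φ * I)‖ ^ p) (2 * π) := fun φ => by
  simp [add_mul, exp_add, exp_two_pi_mul_I]

end Complex

theorem mean_xi_ge (ξ : ℂ) (hξ : 1 ≤ ‖ξ‖) (p : ℝ) (hp : 0 ≤ p) :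
    (∫ φ in (0:ℝ)..(2 * π),
        ‖1 + Complex.exp (φ * Complex.I)‖ ^ p) ^ (1 / p) ≤
      (∫ φ in (0:ℝ)..(2 * π),
        ‖ξ + Complex.exp (φ * Complex.I)‖ ^ p) ^ (1 / p) := by
  have hmono : ∫ φ in (0:ℝ)..(2 * π), ‖1 + Complex.exp (φ * Complex.I)‖ ^ p ≤
      ∫ φ in (0:ℝ)..(2 * π), ‖ξ + Complex.exp (φ * Complex.I)‖ ^ p := by
    rw [← zero_add (2 * π),
      ← (Complex.periodic_norm_one_add_exp_mul_I_rpow p).intervalIntegral_comp_sub_right 0 ξ.arg]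
    refine intervalIntegral.integral_mono_on (by positivity) ?_ ?_ fun φ _ =>
      rpow_le_rpow (norm_nonneg _) (Complex.norm_one_add_exp_sub_arg_le hξ φ) hp
    all_goals
      refine Continuous.intervalIntegrable ?_ _ _
      fun_prop (disch := exact Or.inr hp)
  have hnonneg : 0 ≤ ∫ φ in (0:ℝ)..(2 * π), ‖1 + Complex.exp (φ * Complex.I)‖ ^ p :=
    intervalIntegral.integral_nonneg (by positivity) fun φ _ => by positivity
  exact rpow_le_rpow hnonneg hmono (by positivity)
end
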